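/- arXiv:1304.5502 — 11 statements merged into one kernel-verified Lean document; each statement's English description precedes it below -/
import Mathlib

section
/- Let ∇ be the torsion-free affine connection on ℝ² defined by ∇_{∂x}∂x = 0, ∇_{∂x}∂y = γ ∂x, ∇_{∂y}∂y = εx ∂x + φ ∂y, where γ, ε, φ are real constants. Then a vector field of the form h(y) ∂x is a Killing field of ∇ if and only if h satisfies the linear ODE h'' + (2γ − φ)h' + εh = 0. -/
noncomputable section

abbrev Pl := ℝ × ℝ
abbrev VF := Pl → Pl

/-- Lie bracket of vector fields on the plane. -/
def lieB (X Y : VF) : VF := fun p => fderiv ℝ Y p (X p) - fderiv ℝ X p (Y p)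

/-- Covariant derivative of the torsion-free connection with Christoffel data
`Γ11 = ∇_{∂x}∂x`, `Γ12 = ∇_{∂x}∂y = ∇_{∂y}∂x`, `Γ22 = ∇_{∂y}∂y`. -/
def cov (Γ11 Γ12 Γ22 : VF) (X Y : VF) : VF := fun p =>
  fderiv ℝ Y p (X p)
    + ((X p).1 * (Y p).1) • Γ11 p
    + ((X p).1 * (Y p).2 + (X p).2 * (Y p).1) • Γ12 p
    + ((X p).2 * (Y p).2) • Γ22 p

/-- `X` is a Killing field of the connection: `[X, ∇_Y Z] − ∇_Y [X,Z] = ∇_{[X,Y]} Z`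
for all (smooth) vector fields `Y`, `Z`. -/
def IsKilling (Γ11 Γ12 Γ22 : VF) (X : VF) : Prop :=
  ∀ Y Z : VF, ContDiff ℝ (⊤ : ℕ∞) Y → ContDiff ℝ (⊤ : ℕ∞) Z → ∀ p : Pl,
    lieB X (cov Γ11 Γ12 Γ22 Y Z) p
      = cov Γ11 Γ12 Γ22 Y (lieB X Z) p + cov Γ11 Γ12 Γ22 (lieB X Y) Z p

lemma hasF_snd_comp {g : ℝ → ℝ} (p : Pl) (hg : DifferentiableAt ℝ g p.2) :
    HasFDerivAt (fun q : Pl => g q.2) ((deriv g p.2) • ContinuousLinearMap.snd ℝ ℝ ℝ) p :=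
  hg.hasDerivAt.comp_hasFDerivAt p hasFDerivAt_snd

lemma killing_key (γ ε φ : ℝ) (h : ℝ → ℝ) (hh : ContDiff ℝ (⊤ : ℕ∞) h)
    (Y Z : VF) (hY : ContDiff ℝ (⊤ : ℕ∞) Y) (hZ : ContDiff ℝ (⊤ : ℕ∞) Z) (p : Pl) :
    lieB (fun q => (h q.2, 0)) (cov (fun _ => (0,0)) (fun _ => (γ,0)) (fun q => (ε*q.1, φ)) Y Z) p
      = cov (fun _ => (0,0)) (fun _ => (γ,0)) (fun q => (ε*q.1, φ)) Y (lieB (fun q => (h q.2, 0)) Z) p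
        + cov (fun _ => (0,0)) (fun _ => (γ,0)) (fun q => (ε*q.1, φ)) (lieB (fun q => (h q.2, 0)) Y) Z p
        + (((Y p).2*(Z p).2) * (deriv (deriv h) p.2 + (2*γ-φ)*deriv h p.2 + ε*h p.2), 0) := by
  have hdh : ContDiff ℝ (⊤:ℕ∞) (deriv h) := (contDiff_infty_iff_deriv.mp (hh.of_le (by simp))).2
  have hXd : ∀ q : Pl, HasFDerivAt (fun q : Pl => ((h q.2 : ℝ), (0:ℝ)))
      (((deriv h q.2) • ContinuousLinearMap.snd ℝ ℝ ℝ).prod 0) q := fun q =>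
    (hasF_snd_comp q (hh.differentiable (by simp)).differentiableAt).prodMk (hasFDerivAt_const 0 q)
  have hfX : ∀ q : Pl, fderiv ℝ (fun q : Pl => ((h q.2 : ℝ), (0:ℝ))) q
      = ((deriv h q.2) • ContinuousLinearMap.snd ℝ ℝ ℝ).prod 0 := fun q => (hXd q).fderiv
  have hYd : ∀ q : Pl, HasFDerivAt Y (fderiv ℝ Y q) q :=
    fun q => (hY.differentiable (by simp) q).hasFDerivAt
  have hZd : ∀ q : Pl, HasFDerivAt Z (fderiv ℝ Z q) q :=
    fun q => (hZ.differentiable (by simp) q).hasFDerivAt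
  have hZ2 : HasFDerivAt (fderiv ℝ Z) (fderiv ℝ (fderiv ℝ Z) p) p :=
    ((hZ.fderiv_right (m := 1) (WithTop.coe_le_coe.mpr le_top)).differentiable (by simp) p).hasFDerivAt
  have hsym : fderiv ℝ (fderiv ℝ Z) p (h p.2, 0) (Y p) = fderiv ℝ (fderiv ℝ Z) p (Y p) (h p.2, 0) :=
    (hZ.contDiffAt.isSymmSndFDerivAt (by rw [minSmoothness_of_isRCLikeNormedField]; exact WithTop.coe_le_coe.mpr le_top)) _ _
  -- explicit form of cov Y Z
  have covYZ_eq : cov (fun _ => (0,0)) (fun _ => (γ,0)) (fun q => (ε*q.1, φ)) Y Z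
      = fun q => fderiv ℝ Z q (Y q)
          + ((Y q).1*(Z q).2 + (Y q).2*(Z q).1) • ((γ:ℝ),(0:ℝ))
          + ((Y q).2*(Z q).2) • ((ε*q.1 : ℝ), φ) := by
    funext q
    simp [cov, Prod.mk_zero_zero]
  -- explicit form of lieB X Z
  have lieXZ_eq : lieB (fun q => (h q.2, 0)) Z
      = fun q => fderiv ℝ Z q (h q.2, 0) - ((deriv h q.2) * (Z q).2, 0) := by
    funext q
    simp [lieB, hfX q]
  -- derivative of cov Y Z at p
  have hG : HasFDerivAt (fun q : Pl => ((ε*q.1 : ℝ), φ))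
      ((ε • ContinuousLinearMap.fst ℝ ℝ ℝ).prod 0) p :=
    ((hasFDerivAt_fst.const_mul ε)).prodMk (hasFDerivAt_const φ p)
  have hcov : HasFDerivAt (fun q => fderiv ℝ Z q (Y q)
          + ((Y q).1*(Z q).2 + (Y q).2*(Z q).1) • ((γ:ℝ),(0:ℝ))
          + ((Y q).2*(Z q).2) • ((ε*q.1 : ℝ), φ)) _ p :=
    ((hZ2.clm_apply (hYd p)).add
        ((((hYd p).fst.mul (hZd p).snd).add ((hYd p).snd.mul (hZd p).fst)).smul_const ((γ:ℝ),(0:ℝ)))).add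
      (((hYd p).snd.mul (hZd p).snd).smul hG)
  have hW : HasFDerivAt (fun q => fderiv ℝ Z q (h q.2, 0) - ((deriv h q.2) * (Z q).2, 0)) _ p :=
    (hZ2.clm_apply (hXd p)).sub
      (((hasF_snd_comp p (hdh.differentiable (by simp)).differentiableAt).mul
          (hZd p).snd).prodMk (hasFDerivAt_const 0 p))
  rw [covYZ_eq, lieXZ_eq]
  simp only [lieB, cov]
  rw [hcov.fderiv, hW.fderiv, hfX p]
  simp only [ContinuousLinearMap.add_apply, ContinuousLinearMap.comp_apply,
    ContinuousLinearMap.flip_apply, ContinuousLinearMap.smulRight_apply,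
    ContinuousLinearMap.smul_apply, ContinuousLinearMap.prod_apply,
    ContinuousLinearMap.coe_fst', ContinuousLinearMap.coe_snd',
    ContinuousLinearMap.zero_apply, smul_eq_mul, map_sub, map_add,
    ContinuousLinearMap.sub_apply]
  rw [hsym]
  rw [Prod.ext_iff]
  constructor <;>
    simp only [Prod.fst_add, Prod.snd_add, Prod.fst_sub, Prod.snd_sub, Prod.smul_fst,
      Prod.smul_snd, Prod.mk_zero_zero, Prod.fst_zero, Prod.snd_zero, smul_eq_mul,
      Prod.mk.injEq, Pi.mul_apply] <;>
    ring

/-- for the connection `∇_{∂x}∂x = 0`, `∇_{∂x}∂y = γ ∂x`,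
`∇_{∂y}∂y = εx ∂x + φ ∂y`, the field `h(y) ∂x` is Killing iff
`h'' + (2γ − φ)h' + εh = 0`. -/
theorem stmt0 (γ ε φ : ℝ) (h : ℝ → ℝ) (hh : ContDiff ℝ (⊤ : ℕ∞) h) :
    IsKilling (fun _ => (0, 0)) (fun _ => (γ, 0)) (fun p => (ε * p.1, φ))
        (fun p => (h p.2, 0)) ↔
      ∀ y : ℝ, deriv (deriv h) y + (2 * γ - φ) * deriv h y + ε * h y = 0 := by

  constructor
  · intro HK y
    have h1 := HK (fun _ => ((0:ℝ),(1:ℝ))) (fun _ => ((0:ℝ),(1:ℝ)))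
      contDiff_const contDiff_const ((0:ℝ), y)
    have h2 := killing_key γ ε φ h hh (fun _ => ((0:ℝ),(1:ℝ))) (fun _ => ((0:ℝ),(1:ℝ)))
      contDiff_const contDiff_const ((0:ℝ), y)
    rw [h1] at h2
    have h3 := left_eq_add.mp h2
    have h4 := congrArg Prod.fst h3
    simpa using h4
  · intro hode Y Z hY hZ p
    rw [killing_key γ ε φ h hh Y Z hY hZ p, hode p.2]
    simp
end
end

section
/- Let ∇ be the connection on ℝ² with ∇_{∂x}∂x = 0, ∇_{∂x}∂y = γ ∂x, ∇_{∂y}∂y = εx ∂x + φ ∂y. Then ∇ is locally homogeneous at the origin: there exist two Killing fields of ∇ that are linearly independent at the origin. Specifically, ∂y is a Killing field, and for any solution h of h'' + (2γ−φ)h' + εh = 0 with h(0) ≠ 0, the field h(y)∂x is a Killing field independent from ∂y at the origin. -/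
noncomputable section

def Gm (γ ε φ : ℝ) (p a b : Pl) : Pl :=
  ((a.1 * b.2 + a.2 * b.1) * γ + a.2 * b.2 * (ε * p.1), a.2 * b.2 * φ)

lemma cov_eq (γ ε φ : ℝ) (Y Z : VF) :
    cov (fun _ => (0,0)) (fun _ => (γ,0)) (fun p => (ε * p.1, φ)) Y Z
      = fun p => fderiv ℝ Z p (Y p)
          + ((Y p).1 * (Z p).2 + (Y p).2 * (Z p).1) • ((γ, 0) : Pl)
          + ((Y p).2 * (Z p).2) • ((ε * p.1, φ) : Pl) := by
  funext p
  simp [cov, Prod.mk_zero_zero]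

lemma cov_val (γ ε φ : ℝ) (Y Z : VF) (p : Pl) :
    cov (fun _ => (0,0)) (fun _ => (γ,0)) (fun p => (ε * p.1, φ)) Y Z p
      = fderiv ℝ Z p (Y p) + Gm γ ε φ p (Y p) (Z p) := by
  have : ((Y p).1 * (Z p).2 + (Y p).2 * (Z p).1) • ((γ, 0) : Pl)
      + ((Y p).2 * (Z p).2) • ((ε * p.1, φ) : Pl) = Gm γ ε φ p (Y p) (Z p) := by
    simp only [Prod.smul_mk, Prod.mk_add_mk, Gm, Prod.mk.injEq, smul_eq_mul]
    constructor <;> first | trivial | ring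
  rw [cov_eq]
  beta_reduce
  rw [add_assoc, this]

open ContinuousLinearMap in
lemma isKilling_of (γ ε φ : ℝ) (X : VF) (hX : ContDiff ℝ (⊤ : ℕ∞) X)
    (hK : ∀ p a b : Pl,
      fderiv ℝ (fderiv ℝ X) p a b + (a.2 * b.2) • ((ε * (X p).1, 0) : Pl)
        + Gm γ ε φ p a (fderiv ℝ X p b) + Gm γ ε φ p (fderiv ℝ X p a) b
      = fderiv ℝ X p (Gm γ ε φ p a b)) :
    IsKilling (fun _ => (0, 0)) (fun _ => (γ, 0)) (fun p => (ε * p.1, φ)) X := by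
  intro Y Z hY hZ p
  have hXd : Differentiable ℝ X := hX.differentiable (by simp)
  have hYd : Differentiable ℝ Y := hY.differentiable (by simp)
  have hZd : Differentiable ℝ Z := hZ.differentiable (by simp)
  have hX1 : Differentiable ℝ (fderiv ℝ X) := (hX.fderiv_right (m := (⊤ : ℕ∞)) (by simp)).differentiable (by simp)
  have hZ1 : Differentiable ℝ (fderiv ℝ Z) := (hZ.fderiv_right (m := (⊤ : ℕ∞)) (by simp)).differentiable (by simp)
  have hDX := (hXd p).hasFDerivAt
  have hDY := (hYd p).hasFDerivAt
  have hDZ := (hZd p).hasFDerivAt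
  have hQX := (hX1 p).hasFDerivAt
  have hQZ := (hZ1 p).hasFDerivAt
  -- component derivatives
  have hY1 : HasFDerivAt (fun q : Pl => (Y q).1) ((fst ℝ ℝ ℝ).comp (fderiv ℝ Y p)) p :=
    (fst ℝ ℝ ℝ).hasFDerivAt.comp p hDY
  have hY2 : HasFDerivAt (fun q : Pl => (Y q).2) ((snd ℝ ℝ ℝ).comp (fderiv ℝ Y p)) p :=
    (snd ℝ ℝ ℝ).hasFDerivAt.comp p hDY
  have hZc1 : HasFDerivAt (fun q : Pl => (Z q).1) ((fst ℝ ℝ ℝ).comp (fderiv ℝ Z p)) p :=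
    (fst ℝ ℝ ℝ).hasFDerivAt.comp p hDZ
  have hZc2 : HasFDerivAt (fun q : Pl => (Z q).2) ((snd ℝ ℝ ℝ).comp (fderiv ℝ Z p)) p :=
    (snd ℝ ℝ ℝ).hasFDerivAt.comp p hDZ
  have hGam : HasFDerivAt (fun q : Pl => ((ε * q.1, φ) : Pl))
      ((ε • (fst ℝ ℝ ℝ)).prod 0) p :=
    ((hasFDerivAt_fst (p := p)).const_mul ε).prodMk (hasFDerivAt_const φ p)
  have hcov : HasFDerivAt
      (fun q : Pl => fderiv ℝ Z q (Y q)
          + ((Y q).1 * (Z q).2 + (Y q).2 * (Z q).1) • ((γ, 0) : Pl)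
          + ((Y q).2 * (Z q).2) • ((ε * q.1, φ) : Pl))
      (((fderiv ℝ Z p).comp (fderiv ℝ Y p) + (fderiv ℝ (fderiv ℝ Z) p).flip (Y p))
        + (((Y p).1 • ((snd ℝ ℝ ℝ).comp (fderiv ℝ Z p))
            + (Z p).2 • ((fst ℝ ℝ ℝ).comp (fderiv ℝ Y p)))
          + ((Y p).2 • ((fst ℝ ℝ ℝ).comp (fderiv ℝ Z p))
            + (Z p).1 • ((snd ℝ ℝ ℝ).comp (fderiv ℝ Y p)))).smulRight ((γ, 0) : Pl)
        + (((Y p).2 * (Z p).2) • ((ε • (fst ℝ ℝ ℝ)).prod 0)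
          + (((Y p).2 • ((snd ℝ ℝ ℝ).comp (fderiv ℝ Z p))
            + (Z p).2 • ((snd ℝ ℝ ℝ).comp (fderiv ℝ Y p)))).smulRight ((ε * p.1, φ) : Pl))) p :=
    ((hQZ.clm_apply hDY).add
      (((hY1.mul hZc2).add (hY2.mul hZc1)).smul_const ((γ, 0) : Pl))).add
      ((hY2.mul hZc2).smul hGam)
  have hLZ : HasFDerivAt (lieB X Z)
      (((fderiv ℝ Z p).comp (fderiv ℝ X p) + (fderiv ℝ (fderiv ℝ Z) p).flip (X p))
        - ((fderiv ℝ X p).comp (fderiv ℝ Z p) + (fderiv ℝ (fderiv ℝ X) p).flip (Z p))) p := by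
    exact (hQZ.clm_apply hDX).sub (hQX.clm_apply hDZ)
  have hs : fderiv ℝ (fderiv ℝ Z) p (X p) (Y p) = fderiv ℝ (fderiv ℝ Z) p (Y p) (X p) :=
    (hZ.contDiffAt.isSymmSndFDerivAt (by rw [minSmoothness_of_isRCLikeNormedField]; exact WithTop.coe_le_coe.mpr (le_top : (2:ℕ∞) ≤ ⊤))).eq (X p) (Y p)
  have hk := hK p (Y p) (Z p)
  simp only [lieB]
  rw [cov_eq γ ε φ Y Z, hcov.fderiv]
  beta_reduce
  rw [cov_val γ ε φ Y (lieB X Z) p, cov_val γ ε φ (lieB X Y) Z p, hLZ.fderiv]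
  simp only [lieB]
  simp only [ContinuousLinearMap.add_apply, ContinuousLinearMap.sub_apply,
    ContinuousLinearMap.coe_comp', Function.comp_apply, ContinuousLinearMap.flip_apply,
    ContinuousLinearMap.smul_apply, ContinuousLinearMap.smulRight_apply,
    ContinuousLinearMap.prod_apply, ContinuousLinearMap.coe_fst', ContinuousLinearMap.coe_snd',
    ContinuousLinearMap.zero_apply, map_add, map_sub, smul_eq_mul] at hk ⊢
  have hGmeq : ∀ a b : Pl, Gm γ ε φ p a b
      = (a.1 * b.2 + a.2 * b.1) • ((γ, 0) : Pl) + (a.2 * b.2) • ((ε * p.1, φ) : Pl) := by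
    intro a b
    simp only [Prod.smul_mk, Prod.mk_add_mk, Gm, Prod.mk.injEq, smul_eq_mul]
    constructor <;> first | trivial | ring
  simp only [hGmeq] at hk ⊢
  simp only [map_add, map_smul] at hk ⊢
  have hk1 := congrArg Prod.fst hk
  have hk2 := congrArg Prod.snd hk
  have hs1 := congrArg Prod.fst hs
  have hs2 := congrArg Prod.snd hs
  rw [Prod.ext_iff]
  constructor
  all_goals simp only [Prod.fst_add, Prod.fst_sub, Prod.smul_fst, Prod.snd_add,
    Prod.snd_sub, Prod.smul_snd, smul_eq_mul] at hk1 hk2 hs1 hs2 ⊢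
  · linear_combination hk1 + hs1
  · linear_combination hk2 + hs2

lemma killing_dy (γ ε φ : ℝ) :
    IsKilling (fun _ => (0, 0)) (fun _ => (γ, 0)) (fun p => (ε * p.1, φ))
      (fun _ => ((0 : ℝ), (1 : ℝ))) := by
  apply isKilling_of γ ε φ _ contDiff_const
  intro p a b
  have h0 : fderiv ℝ (fun _ : Pl => ((0 : ℝ), (1 : ℝ))) = fun _ => 0 := by
    funext q; exact fderiv_const_apply _
  rw [h0]
  rw [show fderiv ℝ (fun _ : Pl => (0 : Pl →L[ℝ] Pl)) p = 0 from fderiv_const_apply _]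
  simp [Gm, Prod.ext_iff]

open ContinuousLinearMap in
lemma killing_h (γ ε φ : ℝ) (h : ℝ → ℝ) (hh : ContDiff ℝ (⊤ : ℕ∞) h)
    (hode : ∀ y : ℝ, deriv (deriv h) y + (2 * γ - φ) * deriv h y + ε * h y = 0) :
    IsKilling (fun _ => (0, 0)) (fun _ => (γ, 0)) (fun p => (ε * p.1, φ))
      (fun p => ((h p.2 : ℝ), (0 : ℝ))) := by
  have hh1 : Differentiable ℝ h := hh.differentiable (by simp)
  have hh2 : Differentiable ℝ (deriv h) := (contDiff_infty_iff_deriv.mp (hh.of_le (m := ((⊤ : ℕ∞) : WithTop ℕ∞)) (by simp))).2.differentiable (by simp)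
  set M : Pl →L[ℝ] Pl := (snd ℝ ℝ ℝ).prod 0 with hM
  have hXd : ∀ q : Pl, HasFDerivAt (fun p : Pl => ((h p.2 : ℝ), (0 : ℝ)))
      (deriv h q.2 • M) q := by
    intro q
    have h1 : HasFDerivAt (fun p : Pl => h p.2) (deriv h q.2 • (snd ℝ ℝ ℝ)) q :=
      (hh1 q.2).hasDerivAt.comp_hasFDerivAt q hasFDerivAt_snd
    have := h1.prodMk (hasFDerivAt_const (0 : ℝ) q)
    convert this using 1 <;> try rfl
    ext w <;> simp [hM, smul_eq_mul]
  have hfd : fderiv ℝ (fun p : Pl => ((h p.2 : ℝ), (0 : ℝ))) = fun q => deriv h q.2 • M := by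
    funext q; exact (hXd q).fderiv
  have hQd : ∀ q : Pl, fderiv ℝ (fderiv ℝ (fun p : Pl => ((h p.2 : ℝ), (0 : ℝ)))) q
      = ((deriv (deriv h) q.2 • (snd ℝ ℝ ℝ)).smulRight M) := by
    intro q
    rw [hfd]
    have h1 : HasFDerivAt (fun p : Pl => deriv h p.2) (deriv (deriv h) q.2 • (snd ℝ ℝ ℝ)) q :=
      (hh2 q.2).hasDerivAt.comp_hasFDerivAt q hasFDerivAt_snd
    exact (h1.smul_const M).fderiv
  refine isKilling_of γ ε φ (fun p : Pl => ((h p.2 : ℝ), (0 : ℝ)))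
    ((hh.comp contDiff_snd).prodMk contDiff_const) ?_
  intro p a b
  rw [hQd p, hfd]
  have hode2 := hode p.2
  simp only [hM, smulRight_apply, ContinuousLinearMap.smul_apply, prod_apply, coe_snd',
    ContinuousLinearMap.zero_apply, Prod.smul_mk, smul_eq_mul, Gm, mul_zero, mul_one]
  rw [Prod.ext_iff]
  simp only [Prod.fst_add, Prod.snd_add, Prod.smul_fst, Prod.smul_snd, smul_eq_mul]
  constructor
  · simp only [mul_zero, zero_mul, add_zero, mul_one]
    linear_combination a.2 * b.2 * hode2
  · simp

lemma linind (c : ℝ) (hc : c ≠ 0) : LinearIndependent ℝ ![((c, 0) : Pl), ((0, 1) : Pl)] := by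
  rw [linearIndependent_fin2]
  constructor
  · simp [Prod.ext_iff]
  · intro a
    simp [Matrix.cons_val_one, Matrix.head_cons, Matrix.cons_val_zero, Prod.ext_iff, Prod.smul_mk]
    intro h; exact (hc h.symm).elim

lemma exists_sol (c e : ℝ) :
    ∃ h : ℝ → ℝ, ContDiff ℝ (⊤ : ℕ∞) h ∧
      (∀ y : ℝ, deriv (deriv h) y + c * deriv h y + e * h y = 0) ∧ h 0 = 1 := by
  obtain ⟨s, hs⟩ : ∃ s : ℂ, s ^ 2 = ((c : ℂ) ^ 2 / 4 - e) :=
    IsAlgClosed.exists_pow_nat_eq _ two_pos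
  set r : ℂ := -(c / 2) + s with hr
  have hroot : r ^ 2 + c * r + e = 0 := by
    rw [hr]; push_cast; linear_combination hs
  refine ⟨fun y => (Complex.exp (r * y)).re, ?_, ?_, by simp⟩
  · have h1 : ContDiff ℝ (⊤ : ℕ∞) (fun y : ℝ => Complex.exp (r * y)) := by
      apply ((Complex.contDiff_exp (𝕜 := ℂ)).restrict_scalars ℝ).comp
      exact (contDiff_const.mul Complex.ofRealCLM.contDiff)
    exact Complex.reCLM.contDiff.comp h1
  · intro y
    have hexp : ∀ t : ℝ, HasDerivAt (fun y : ℝ => Complex.exp (r * y))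
        (r * Complex.exp (r * t)) t := by
      intro t
      have h0 : HasDerivAt (fun y : ℝ => (r * y : ℂ)) r t := by
        simpa using (Complex.ofRealCLM.hasDerivAt (x := t)).const_mul r
      simpa [mul_comm] using h0.cexp
    have hd1 : ∀ t : ℝ, HasDerivAt (fun y : ℝ => (Complex.exp (r * y)).re)
        ((r * Complex.exp (r * t)).re) t := fun t =>
      (Complex.reCLM.hasFDerivAt.comp_hasDerivAt t (hexp t))
    have hderiv1 : deriv (fun y : ℝ => (Complex.exp (r * y)).re)
        = fun t : ℝ => (r * Complex.exp (r * t)).re := funext fun t => (hd1 t).deriv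
    have hd2 : HasDerivAt (fun t : ℝ => (r * Complex.exp (r * (t : ℝ))).re)
        ((r * (r * Complex.exp (r * y))).re) y :=
      (Complex.reCLM.hasFDerivAt.comp_hasDerivAt y ((hexp y).const_mul r))
    rw [hderiv1, hd2.deriv]
    beta_reduce
    have : (r * (r * Complex.exp (r * y))) + c * (r * Complex.exp (r * y))
        + e * Complex.exp (r * y) = 0 := by
      have : ((r ^ 2 + c * r + e) * Complex.exp (r * y)) = 0 := by rw [hroot]; ring
      linear_combination this
    calc (r * (r * Complex.exp (r * y))).re + c * (r * Complex.exp (r * y)).re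
          + e * (Complex.exp (r * y)).re
        = ((r * (r * Complex.exp (r * y))) + (c : ℂ) * (r * Complex.exp (r * y))
            + (e : ℂ) * Complex.exp (r * y)).re := by
          simp [Complex.add_re, Complex.mul_re, Complex.ofReal_re, Complex.ofReal_im]
      _ = 0 := by rw [this]; simp


/-- the connection `∇_{∂x}∂x = 0`, `∇_{∂x}∂y = γ∂x`,
`∇_{∂y}∂y = εx∂x + φ∂y` is locally homogeneous at the origin: `∂y` is Killing,
any solution `h` of `h'' + (2γ−φ)h' + εh = 0` with `h 0 ≠ 0` gives a Killing field
`h(y)∂x` independent from `∂y` at the origin, and in particular there exist two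
Killing fields linearly independent at the origin. -/
theorem stmt1 (γ ε φ : ℝ) :
    IsKilling (fun _ => (0, 0)) (fun _ => (γ, 0)) (fun p => (ε * p.1, φ))
        (fun _ => ((0 : ℝ), (1 : ℝ))) ∧
    (∀ h : ℝ → ℝ, ContDiff ℝ (⊤ : ℕ∞) h →
      (∀ y : ℝ, deriv (deriv h) y + (2 * γ - φ) * deriv h y + ε * h y = 0) →
      h 0 ≠ 0 →
      IsKilling (fun _ => (0, 0)) (fun _ => (γ, 0)) (fun p => (ε * p.1, φ))
          (fun p => (h p.2, 0)) ∧
      LinearIndependent ℝ ![((h 0, 0) : Pl), ((0, 1) : Pl)]) ∧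
    (∃ V W : VF,
      IsKilling (fun _ => (0, 0)) (fun _ => (γ, 0)) (fun p => (ε * p.1, φ)) V ∧
      IsKilling (fun _ => (0, 0)) (fun _ => (γ, 0)) (fun p => (ε * p.1, φ)) W ∧
      LinearIndependent ℝ ![V (0, 0), W (0, 0)]) := by
  refine ⟨killing_dy γ ε φ, fun h hh hode h0 => ⟨killing_h γ ε φ h hh hode, linind _ h0⟩, ?_⟩
  obtain ⟨h, hh, hode, h1⟩ := exists_sol (2 * γ - φ) ε
  exact ⟨fun p => (h p.2, 0), fun _ => ((0 : ℝ), (1 : ℝ)),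
    killing_h γ ε φ h hh hode, killing_dy γ ε φ,
    by simpa [h1] using linind (h 0) (by rw [h1]; norm_num)⟩
end
end

section
/- Let 𝔤 be a finite-dimensional real Lie algebra of dimension at least 2 containing elements X, Y, Z with [X,Y] = Y, such that {X,Y} spans a subalgebra 𝔥 and Z ∉ 𝔥. Write [Z,X] = aX + bY + cZ and [Z,Y] = dX + eY + fZ. Then the Jacobi identity forces f = 0 and a = −ce, and moreover either d = 0 (so Z and Y span a two-dimensional subalgebra with [Z,Y] = eY) or c = 1 (in which case W = −2eX + bY + 2Z satisfies [X,W] = −W, so X and W span a two-dimensional non-abelian subalgebra). -/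
/-!
Expanding the Jacobi identity for `Z, X, Y` with the given brackets yields
`(d - c d + f a) X + (f b - a - c e) Y + f Z = 0`, so by linear independence of `X, Y, Z`
we get `f = 0`, `a = -c e` and `d (1 - c) = 0`. When `c = 1` the bracket `⁅X, Z⁆` equals
`e X - b Y - Z`, which makes `W = -2e X + b Y + 2 Z` an eigenvector of `ad X` for `-1`.
-/

open Submodule

theorem eq_zero_of_smul_add_smul_add_smul_eq_zero {K V : Type*} [Field K] [AddCommGroup V]
    [Module K V] {x y z : V} (hxy : LinearIndependent K ![x, y])
    (hz : z ∉ span K ({x, y} : Set V)) {p q r : K} (h : p • x + q • y + r • z = 0) :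
    p = 0 ∧ q = 0 ∧ r = 0 := by
  have hr : r = 0 := by
    by_contra hr
    refine hz ?_
    have hz_eq : z = r⁻¹ • -(p • x + q • y) := by
      rw [eq_inv_smul_iff₀ hr, eq_neg_iff_add_eq_zero, add_comm]
      exact h
    rw [hz_eq]
    exact smul_mem _ _ (neg_mem (mem_span_pair.2 ⟨p, q, rfl⟩))
  rw [hr, zero_smul, add_zero] at h
  obtain ⟨hp, hq⟩ := LinearIndependent.pair_iff.1 hxy p q h
  exact ⟨hp, hq, hr⟩

section

variable {R L : Type*} [CommRing R] [LieRing L] [LieAlgebra R L] {X Y Z : L} {a b c d e f : R}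

theorem jacobi_relation (hXY : ⁅X, Y⁆ = Y) (hZX : ⁅Z, X⁆ = a • X + b • Y + c • Z)
    (hZY : ⁅Z, Y⁆ = d • X + e • Y + f • Z) :
    (d - c * d + f * a) • X + (f * b - a - c * e) • Y + f • Z = 0 := by
  have hXZ : ⁅X, Z⁆ = -(a • X + b • Y + c • Z) := by rw [← hZX, lie_skew]
  have jacobi := leibniz_lie Z X Y
  simp only [hXY, hZY, hZX, hXZ, add_lie, smul_lie, lie_add, lie_smul, lie_self] at jacobi
  linear_combination (norm := module) jacobi

theorem lie_eq_neg_of_lie_eq_self (hXY : ⁅X, Y⁆ = Y) (hZX : ⁅Z, X⁆ = -e • X + b • Y + Z) :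
    ⁅X, (-(2 * e)) • X + b • Y + (2 : R) • Z⁆ = -((-(2 * e)) • X + b • Y + (2 : R) • Z) := by
  have hXZ : ⁅X, Z⁆ = -(-e • X + b • Y + Z) := by rw [← hZX, lie_skew]
  simp only [lie_add, lie_smul, lie_self, hXY, hXZ]
  module

end

theorem stmt3_general {L : Type*} [LieRing L] [LieAlgebra ℝ L]
    (X Y Z : L) (a b c d e f : ℝ)
    (hXY : ⁅X, Y⁆ = Y)
    (hXYind : LinearIndependent ℝ ![X, Y])
    (hZ : Z ∉ Submodule.span ℝ ({X, Y} : Set L))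
    (hZX : ⁅Z, X⁆ = a • X + b • Y + c • Z)
    (hZY : ⁅Z, Y⁆ = d • X + e • Y + f • Z) :
    f = 0 ∧ a = -(c * e) ∧
      ((d = 0 ∧ ⁅Z, Y⁆ = e • Y) ∨
        (c = 1 ∧
          ⁅X, (-(2 * e)) • X + b • Y + (2 : ℝ) • Z⁆
            = -((-(2 * e)) • X + b • Y + (2 : ℝ) • Z))) := by
  obtain ⟨hX, hY, hf⟩ := eq_zero_of_smul_add_smul_add_smul_eq_zero hXYind hZ
    (jacobi_relation hXY hZX hZY)
  subst hf
  have ha : a = -(c * e) := by linear_combination -hY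
  refine ⟨rfl, ha, ?_⟩
  rcases mul_eq_zero.1 (show d * (1 - c) = 0 by linear_combination hX) with hd | hc
  · left
    exact ⟨hd, by rw [hZY, hd]; simp⟩
  · right
    obtain rfl : c = 1 := by linear_combination -hc
    refine ⟨rfl, lie_eq_neg_of_lie_eq_self hXY ?_⟩
    rw [hZX, ha]
    module

/-- in a finite-dimensional real Lie algebra of dimension ≥ 2,
given `X, Y` spanning a subalgebra (as `⁅X,Y⁆ = Y`) with `Z` outside it, and
`⁅Z,X⁆ = aX + bY + cZ`, `⁅Z,Y⁆ = dX + eY + fZ`, the Jacobi identity forces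
`f = 0` and `a = −ce`, and either `d = 0` (so `Z, Y` span a two-dimensional
subalgebra with `⁅Z,Y⁆ = eY`) or `c = 1` (in which case `W = −2eX + bY + 2Z`
satisfies `⁅X,W⁆ = −W`). -/
theorem stmt3 {L : Type*} [LieRing L] [LieAlgebra ℝ L] [Module.Finite ℝ L]
    (hdim : 2 ≤ Module.finrank ℝ L)
    (X Y Z : L) (a b c d e f : ℝ)
    (hXY : ⁅X, Y⁆ = Y)
    (hXYind : LinearIndependent ℝ ![X, Y])
    (hZ : Z ∉ Submodule.span ℝ ({X, Y} : Set L))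
    (hZX : ⁅Z, X⁆ = a • X + b • Y + c • Z)
    (hZY : ⁅Z, Y⁆ = d • X + e • Y + f • Z) :
    f = 0 ∧ a = -(c * e) ∧
      ((d = 0 ∧ ⁅Z, Y⁆ = e • Y) ∨
        (c = 1 ∧
          ⁅X, (-(2 * e)) • X + b • Y + (2 : ℝ) • Z⁆
            = -((-(2 * e)) • X + b • Y + (2 : ℝ) • Z))) :=
  stmt3_general X Y Z a b c d e f hXY hXYind hZ hZX hZY
end

section
/- Let f : ℝ≥0 → ℝ² be analytic near 0 with f(0) = (a₁,a₂), and consider the system of ODEs t·x_i'(t) = F_i(x₁(t), x₂(t), t), i = 1,2, where F₁, F₂ are real-analytic near (a₁,a₂,0) with F_i(a₁,a₂,0) = 0. If no eigenvalue of the Jacobian matrix (∂F_i/∂x_j) at (a₁,a₂,0) is a strictly positive integer, then there exists a real-analytic solution (x₁(t), x₂(t)) defined near t = 0 with x_i(0) = a_i. -/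
/-!
Write the solution as `x t = ∑ uₖ tᵏ` with `u₀ = a` and let `A = ∂ₓF (a, 0)`. By the composition
formula for power series, the coefficient of `tᵏ` in `F (x t, t)` is `A uₖ` plus a polynomial in
`u₁, …, uₖ₋₁`, while `t x' t` has coefficients `k uₖ`. The equation is therefore the recursion
`(k - A) uₖ = (terms in u₁, …, uₖ₋₁)`, solvable because `k ∉ σ(A)`. The resolvents `(k - A)⁻¹`
tend to `0`, hence are uniformly bounded, and since the nonlinear terms are quadratically small a
majorant induction gives `∑ ‖uₖ‖ rᵏ ≤ C r` for small `r`. So the formal solution converges, and both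
sides of the equation are analytic with the same Taylor coefficients. In dimension two, a positive
integer in the real spectrum of `A` is an eigenvalue of the complexified Jacobian matrix.
-/

open Filter Topology
open scoped NNReal ENNReal

theorem Nat.exists_fixed_of_causal {α : Type*} [Nonempty α] (Φ : (ℕ → α) → ℕ → α)
    (hΦ : ∀ u v k, (∀ j < k, u j = v j) → Φ u k = Φ v k) : ∃ u : ℕ → α, ∀ k, u k = Φ u k := by
  inhabit α
  let u : ℕ → α := Nat.strongRec fun k rec => Φ (fun j => if h : j < k then rec j h else default) k
  refine ⟨u, fun k => ?_⟩
  rw [show u k = _ from Nat.strongRec_eq _ k]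
  exact hΦ _ _ k fun j hj => by simp [hj, u]

theorem Composition.blocksFun_lt_of_length_ne_one {n : ℕ} {c : Composition n} (h : c.length ≠ 1)
    (i : Fin c.length) : c.blocksFun i < n := by
  have hn : 0 < n := lt_of_lt_of_le (c.one_le_blocksFun i) (c.blocksFun_le i)
  exact (Composition.ne_single_iff hn).mp (mt (Composition.eq_single_iff_length hn).mp h) i

theorem Composition.sigma_blocks_injective :
    Function.Injective fun c : Σ n, Composition n => c.2.blocks := by
  rintro ⟨n, c⟩ ⟨m, d⟩ h
  obtain rfl : n = m := by rw [← c.blocks_sum, ← d.blocks_sum]; exact congrArg List.sum h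
  exact congrArg _ (Composition.ext h)

open Finset in
theorem Composition.sum_sum_mul_prod_blocksFun_le {g w : ℕ → ℝ} (hg : ∀ n, 0 ≤ g n)
    (hw : ∀ j, 0 ≤ w j) (K : ℕ) :
    ∑ k ∈ Ico 1 (K + 1), ∑ c : Composition k with c.length ≠ 1,
        g c.length * ∏ i, w (c.blocksFun i) ≤
      ∑ n ∈ Ico 2 (K + 1), g n * (∑ j ∈ Ico 1 K, w j) ^ n := by
  let f : (Σ n, Fin n → ℕ) → ℝ := fun s => g s.1 * ∏ i, w (s.2 i)
  let blocks : (Σ k, Composition k) → Σ n, Fin n → ℕ := fun c => ⟨c.2.length, c.2.blocksFun⟩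
  have hinj : Function.Injective blocks :=
    List.equivSigmaTuple.injective.comp Composition.sigma_blocks_injective
  have hrhs : ∑ n ∈ Ico 2 (K + 1), g n * (∑ j ∈ Ico 1 K, w j) ^ n =
      ∑ s ∈ (Ico 2 (K + 1)).sigma fun n => Fintype.piFinset fun _ : Fin n => Ico 1 K, f s := by
    rw [sum_sigma]
    refine sum_congr rfl fun n _ => ?_
    rw [← Fin.prod_const, prod_univ_sum, mul_sum]
  let S := (Ico 1 (K + 1)).sigma fun k => univ.filter fun c : Composition k => c.length ≠ 1
  calc _ = ∑ x ∈ S, f (blocks x) := (sum_sigma _ _ _).symm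
    _ = ∑ s ∈ S.image blocks, f s := (sum_image hinj.injOn).symm
    _ ≤ _ := hrhs ▸ sum_le_sum_of_subset_of_nonneg ?_
      fun s _ _ => mul_nonneg (hg _) (prod_nonneg fun i _ => hw _)
  simp only [S, subset_iff, mem_image, mem_sigma, mem_Ico, mem_filter, Fintype.mem_piFinset]
  rintro _ ⟨⟨k, c⟩, ⟨⟨hk1, hkK⟩, -, hc⟩, rfl⟩
  dsimp only [blocks] at hk1 hkK hc ⊢
  have hlen : 1 ≤ c.length := c.length_pos_of_pos hk1
  have hlen' : c.length ≤ k := c.length_le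
  refine ⟨⟨by omega, by omega⟩, fun i => ⟨c.one_le_blocksFun i, ?_⟩⟩
  have := c.blocksFun_lt_of_length_ne_one hc i
  omega

theorem sum_Ico_two_mul_pow_le {g : ℕ → ℝ} {M r₀ y : ℝ} (hg : ∀ n, 0 ≤ g n)
    (hM : ∀ n, g n * r₀ ^ n ≤ M) (hr₀ : 0 < r₀) (hy : 0 ≤ y) (hy₀ : 2 * y ≤ r₀) (N : ℕ) :
    ∑ n ∈ Finset.Ico 2 N, g n * y ^ n ≤ 2 * M * (y / r₀) ^ 2 := by
  set q := y / r₀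
  have hq0 : 0 ≤ q := div_nonneg hy hr₀.le
  have hq : q ≤ 1 / 2 := by rw [div_le_iff₀ hr₀]; linarith
  have hM0 : 0 ≤ M := (mul_nonneg (hg 0) (pow_nonneg hr₀.le 0)).trans (hM 0)
  calc ∑ n ∈ Finset.Ico 2 N, g n * y ^ n = ∑ n ∈ Finset.Ico 2 N, g n * r₀ ^ n * q ^ n := by
        refine Finset.sum_congr rfl fun n _ => ?_
        rw [mul_assoc, ← mul_pow, mul_div_cancel₀ _ hr₀.ne']
    _ ≤ ∑ n ∈ Finset.Ico 2 N, M * q ^ n :=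
        Finset.sum_le_sum fun n _ => mul_le_mul_of_nonneg_right (hM n) (pow_nonneg hq0 n)
    _ ≤ M * (q ^ 2 / (1 - q)) := by
        rw [← Finset.mul_sum]
        exact mul_le_mul_of_nonneg_left (geom_sum_Ico_le_of_lt_one hq0 (by linarith)) hM0
    _ ≤ 2 * M * q ^ 2 := by
        rw [mul_div_assoc', div_le_iff₀ (by linarith)]
        nlinarith [mul_nonneg hM0 (sq_nonneg q)]

namespace FormalMultilinearSeries

variable {𝕜 E F : Type*} [NontriviallyNormedField 𝕜] [NormedAddCommGroup E] [NormedSpace 𝕜 E]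
  [NormedAddCommGroup F] [NormedSpace 𝕜 F]

variable (𝕜) in
def ofCoeff (c : ℕ → E) : FormalMultilinearSeries 𝕜 𝕜 E :=
  fun n => ContinuousMultilinearMap.mkPiRing 𝕜 (Fin n) (c n)

@[simp]
theorem coeff_ofCoeff (c : ℕ → E) (n : ℕ) : (ofCoeff 𝕜 c).coeff n = c n := by
  simp [coeff, ofCoeff]

@[simp]
theorem norm_ofCoeff (c : ℕ → E) (n : ℕ) : ‖ofCoeff 𝕜 c n‖ = ‖c n‖ :=
  ContinuousMultilinearMap.norm_mkPiRing _

theorem ofCoeff_prodMk (c : ℕ → E) (d : ℕ → F) :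
    ofCoeff 𝕜 (fun n => (c n, d n)) = (ofCoeff 𝕜 c).prod (ofCoeff 𝕜 d) := by
  ext <;> simp [ofCoeff, FormalMultilinearSeries.prod]

theorem hasFPowerSeriesOnBall_ofCoeff_id :
    HasFPowerSeriesOnBall (fun t : 𝕜 => t) (ofCoeff 𝕜 fun n => if n = 1 then (1 : 𝕜) else 0) 0 ⊤
    where
  r_le := by
    refine le_of_eq (radius_eq_top_of_forall_image_add_eq_zero _ 2 fun m => ?_).symm
    ext; simp [ofCoeff]
  r_pos := ENNReal.zero_lt_top
  hasSum {t} _ := by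
    have hterm : (fun n => ofCoeff 𝕜 (fun n => if n = 1 then (1 : 𝕜) else 0) n fun _ => t) =
        fun n => if n = 1 then t else 0 := by
      ext n
      by_cases hn : n = 1 <;> simp [ofCoeff, hn]
    rw [hterm, zero_add]
    exact hasSum_ite_eq 1 t

theorem le_radius_ofCoeff {u : ℕ → E} {r : ℝ≥0} {D : ℝ}
    (h : ∀ K, ∑ k ∈ Finset.Ico 1 K, ‖u k‖ * (r : ℝ) ^ k ≤ D) :
    (r : ℝ≥0∞) ≤ (ofCoeff 𝕜 u).radius := by
  refine le_radius_of_bound _ (‖u 0‖ + D) fun n => ?_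
  have hD : 0 ≤ D := by simpa using h 0
  rw [norm_ofCoeff]
  rcases n with _ | n
  · simpa using hD
  · have := (Finset.single_le_sum (fun k _ => by positivity)
      (by simp : n + 1 ∈ Finset.Ico 1 (n + 2))).trans (h (n + 2))
    linarith [norm_nonneg (u 0)]

theorem coeff_comp (q : FormalMultilinearSeries 𝕜 E F) (p : FormalMultilinearSeries 𝕜 𝕜 E) (n : ℕ) :
    (q.comp p).coeff n = ∑ c : Composition n, q c.length fun i => p.coeff (c.blocksFun i) := by
  simp only [coeff, FormalMultilinearSeries.comp, _root_.sum_apply]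
  rfl

theorem hasSum_smul_deriv_sum [CompleteSpace E] (q : FormalMultilinearSeries 𝕜 𝕜 E) {t : 𝕜}
    (ht : ‖t‖ₑ < q.radius) :
    HasSum (fun n : ℕ => t ^ n • (n : 𝕜) • q.coeff n) (t • deriv q.sum t) := by
  have hq := (q.hasFPowerSeriesOnBall (lt_of_le_of_lt zero_le ht)).fderiv
  have hderiv : HasSum (fun n : ℕ => t ^ n • (n + 1 : 𝕜) • q.coeff (n + 1)) (deriv q.sum t) := by
    have := (hq.hasSum (y := t) (by simpa using ht)).mapL (ContinuousLinearMap.apply 𝕜 E 1)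
    simpa [apply_eq_pow_smul_coeff, derivSeries_coeff_one, ← Nat.cast_smul_eq_nsmul 𝕜] using this
  rw [← hasSum_nat_add_iff' 1]
  simpa [pow_succ, mul_smul, smul_comm t] using hderiv.const_smul t

end FormalMultilinearSeries

theorem HasFPowerSeriesAt.fderiv_prodMk_left_apply {𝕜 E G H : Type*} [NontriviallyNormedField 𝕜]
    [NormedAddCommGroup E] [NormedSpace 𝕜 E] [NormedAddCommGroup G] [NormedSpace 𝕜 G]
    [NormedAddCommGroup H] [NormedSpace 𝕜 H]
    {F : E × G → H} {p : FormalMultilinearSeries 𝕜 (E × G) H} {a : E} {b : G}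
    (hF : HasFPowerSeriesAt F p (a, b)) (v : E) :
    fderiv 𝕜 (fun x => F (x, b)) a v = p 1 fun _ => (v, 0) := by
  have hcomp : HasFDerivAt (fun x => F (x, b))
      ((fderiv 𝕜 F (a, b)).comp ((ContinuousLinearMap.id 𝕜 E).prod 0)) a :=
    hF.differentiableAt.hasFDerivAt.comp a ((hasFDerivAt_id a).prodMk (hasFDerivAt_const b a))
  rw [hcomp.fderiv, ContinuousLinearMap.comp_apply, hF.fderiv_eq]
  rfl

theorem spectrum.exists_norm_resolvent_natCast_le {A : Type*} [NormedRing A] [NormedAlgebra ℝ A]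
    [CompleteSpace A] (a : A) : ∃ S, ∀ k : ℕ, ‖resolvent a (k : ℝ)‖ ≤ S := by
  have hk : Tendsto (fun k : ℕ => (k : ℝ)) atTop (Bornology.cobounded ℝ) :=
    tendsto_norm_atTop_iff_cobounded.mp (by simpa using tendsto_natCast_atTop_atTop)
  obtain ⟨S, hS⟩ := ((resolvent_tendsto_cobounded a).comp hk).norm.bddAbove_range
  exact ⟨S, fun k => hS ⟨k, rfl⟩⟩

theorem ContinuousLinearMap.smul_resolvent_sub_apply {𝕜 E : Type*} [NontriviallyNormedField 𝕜]
    [NormedAddCommGroup E] [NormedSpace 𝕜 E] {A : E →L[𝕜] E} {z : 𝕜} (hz : z ∉ spectrum 𝕜 A)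
    (v : E) : z • resolvent A z v - A (resolvent A z v) = v := by
  have h := congrArg (fun T : E →L[𝕜] E => T v)
    (Ring.mul_inverse_cancel _ (spectrum.notMem_iff.mp hz))
  simpa [Algebra.algebraMap_eq_smul_one, resolvent] using h

theorem ContinuousLinearMap.spectrum_eq_spectrum_matrix_finTwoProd {𝕜 : Type*}
    [NontriviallyNormedField 𝕜] [CompleteSpace 𝕜] (A : 𝕜 × 𝕜 →L[𝕜] 𝕜 × 𝕜) :
    spectrum 𝕜 A = spectrum 𝕜 !![(A (1, 0)).1, (A (0, 1)).1; (A (1, 0)).2, (A (0, 1)).2] := by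
  rw [ContinuousLinearMap.spectrum_eq, ← LinearMap.spectrum_toMatrix _ (Module.Basis.finTwoProd 𝕜)]
  congr 1
  ext i j
  fin_cases i <;> fin_cases j <;> simp [LinearMap.toMatrix_apply]

theorem Matrix.map_mem_spectrum_map {n K L : Type*} [Fintype n] [DecidableEq n] [Field K] [Field L]
    (f : K →+* L) {J : Matrix n n K} {r : K} (h : r ∈ spectrum K J) :
    f r ∈ spectrum L (J.map f) := by
  rw [Matrix.mem_spectrum_iff_isRoot_charpoly] at h ⊢
  rw [Matrix.charpoly_map]
  exact h.map

namespace BriotBouquet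

open FormalMultilinearSeries Finset

section Coefficients

variable {E : Type*} [NormedAddCommGroup E]

/-- The Taylor coefficients of `t ↦ (x t, t)` when `x` has Taylor coefficients `u`. -/
def graphCoeff (u : ℕ → E) (j : ℕ) : E × ℝ := (u j, if j = 1 then 1 else 0)

theorem norm_graphCoeff_le (u : ℕ → E) (j : ℕ) :
    ‖graphCoeff u j‖ ≤ ‖u j‖ + if j = 1 then 1 else 0 := by
  rw [graphCoeff, Prod.norm_def]
  refine max_le (le_add_of_nonneg_right (by positivity)) ?_
  split_ifs <;> simp

theorem sum_norm_graphCoeff_mul_pow_le {u : ℕ → E} {r D : ℝ} (hr : 0 ≤ r) {K : ℕ}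
    (h : ∑ j ∈ Ico 1 K, ‖u j‖ * r ^ j ≤ D) : ∑ j ∈ Ico 1 K, ‖graphCoeff u j‖ * r ^ j ≤ D + r := by
  calc ∑ j ∈ Ico 1 K, ‖graphCoeff u j‖ * r ^ j
      ≤ ∑ j ∈ Ico 1 K, (‖u j‖ * r ^ j + if j = 1 then r else 0) := by
        refine sum_le_sum fun j _ => ?_
        refine (mul_le_mul_of_nonneg_right (norm_graphCoeff_le u j) (pow_nonneg hr j)).trans_eq ?_
        split_ifs with hj <;> simp [hj, add_mul]
    _ ≤ D + r := by
        rw [sum_add_distrib, sum_ite_eq']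
        gcongr
        split_ifs <;> simp [hr]

variable [NormedSpace ℝ E] (p : FormalMultilinearSeries ℝ (E × ℝ) E)

/-- The Taylor coefficient of order `k` of `t ↦ F (x t, t)` minus its term `A uₖ`, where `p` is the
power series of `F` at `(a, 0)` and `A v = p 1 (v, 0)`. -/
def rhsCoeff (u : ℕ → E) (k : ℕ) : E :=
  (∑ c : Composition k with c.length ≠ 1, p c.length fun i => graphCoeff u (c.blocksFun i)) +
    p 1 fun _ => ((0 : E), if k = 1 then 1 else 0)

theorem rhsCoeff_congr {u v : ℕ → E} {k : ℕ} (h : ∀ j < k, u j = v j) :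
    rhsCoeff p u k = rhsCoeff p v k := by
  unfold rhsCoeff
  congr 1
  refine sum_congr rfl fun c hc => ?_
  have hc : c.length ≠ 1 := (mem_filter.mp hc).2
  simp only [graphCoeff, h _ (c.blocksFun_lt_of_length_ne_one hc _)]

theorem exists_coeff_eq_rhsCoeff (B : ℕ → E →L[ℝ] E) (a : E) :
    ∃ u : ℕ → E, u 0 = a ∧ ∀ k, 1 ≤ k → u k = B k (rhsCoeff p u k) := by
  obtain ⟨u, hu⟩ := Nat.exists_fixed_of_causal
    (fun u k => if k = 0 then a else B k (rhsCoeff p u k)) fun u v k h => by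
      rw [rhsCoeff_congr p h]
  exact ⟨u, by simpa using hu 0, fun k hk => by simpa [Nat.one_le_iff_ne_zero.mp hk] using hu k⟩

theorem coeff_comp_ofCoeff_graphCoeff (u : ℕ → E) {k : ℕ} (hk : 1 ≤ k) :
    (p.comp (ofCoeff ℝ (graphCoeff u))).coeff k = rhsCoeff p u k + p 1 fun _ => (u k, 0) := by
  have hsingle : ∑ c : Composition k with ¬c.length ≠ 1,
      (p c.length fun i => graphCoeff u (c.blocksFun i)) = p 1 fun _ => graphCoeff u k := by
    rw [sum_eq_single_of_mem (Composition.single k hk) (by simp)]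
    · exact congrArg (p 1) (funext fun i => by rw [Composition.single_blocksFun])
    · intro c hc hne
      simp only [ne_eq, not_not, mem_filter, mem_univ, true_and] at hc
      exact absurd ((Composition.eq_single_iff_length hk).mpr hc) hne
  have hsplit : (p 1 fun _ => graphCoeff u k) =
      (p 1 fun _ => (u k, 0)) + p 1 fun _ => ((0 : E), if k = 1 then 1 else 0) := by
    have hcurry (x : E × ℝ) :
        continuousMultilinearCurryFin1 ℝ (E × ℝ) E (p 1) x = p 1 fun _ => x :=
      congrArg (p 1) (funext fun i => by fin_cases i; rfl)
    rw [← hcurry, ← hcurry, ← hcurry, ← map_add, graphCoeff, Prod.mk_add_mk, zero_add, add_zero]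
  rw [coeff_comp, ← sum_filter_add_sum_filter_not univ (fun c : Composition k => c.length ≠ 1)]
  simp only [coeff_ofCoeff]
  rw [hsingle, hsplit, rhsCoeff]
  abel

theorem natCast_smul_eq_coeff_comp {A : E →L[ℝ] E} {B : ℕ → E →L[ℝ] E} {u : ℕ → E}
    (hp0 : p 0 = 0) (hA : ∀ v, A v = p 1 fun _ => (v, 0))
    (hB : ∀ k : ℕ, 1 ≤ k → ∀ v, (k : ℝ) • B k v - A (B k v) = v)
    (hu : ∀ k, 1 ≤ k → u k = B k (rhsCoeff p u k)) (k : ℕ) :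
    (k : ℝ) • u k = (p.comp (ofCoeff ℝ (graphCoeff u))).coeff k := by
  rcases Nat.eq_zero_or_pos k with rfl | hk
  · rw [Nat.cast_zero, zero_smul, coeff, comp_coeff_zero', hp0]
    rfl
  · rw [coeff_comp_ofCoeff_graphCoeff p u hk, ← hA, ← hB k hk (rhsCoeff p u k), ← hu k hk]
    abel

end Coefficients

section Majorant

variable {E : Type*} [NormedAddCommGroup E] [NormedSpace ℝ E]
  (p : FormalMultilinearSeries ℝ (E × ℝ) E)

theorem norm_mul_pow_le_of_eq_rhsCoeff {B : E →L[ℝ] E} {S r : ℝ} {u : ℕ → E} {k : ℕ}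
    (hr : 0 ≤ r) (hB : ‖B‖ ≤ S) (hu : u k = B (rhsCoeff p u k)) :
    ‖u k‖ * r ^ k ≤ S * ((∑ c : Composition k with c.length ≠ 1,
        ‖p c.length‖ * ∏ i, ‖graphCoeff u (c.blocksFun i)‖ * r ^ c.blocksFun i) +
      if k = 1 then ‖p 1‖ * r else 0) := by
  have hS : 0 ≤ S := (norm_nonneg _).trans hB
  have hterm (c : Composition k) : ‖p c.length fun i => graphCoeff u (c.blocksFun i)‖ * r ^ k ≤
      ‖p c.length‖ * ∏ i, ‖graphCoeff u (c.blocksFun i)‖ * r ^ c.blocksFun i := by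
    rw [prod_mul_distrib, prod_pow_eq_pow_sum, c.sum_blocksFun, ← mul_assoc]
    gcongr
    exact (p c.length).le_opNorm _
  have hlin : ‖p 1 fun _ => ((0 : E), if k = 1 then (1 : ℝ) else 0)‖ * r ^ k ≤
      if k = 1 then ‖p 1‖ * r else 0 := by
    split_ifs with h
    · subst h
      simpa using mul_le_mul_of_nonneg_right ((p 1).le_opNorm fun _ => ((0 : E), (1 : ℝ))) hr
    · rw [Prod.mk_zero_zero, show (fun _ : Fin 1 => (0 : E × ℝ)) = 0 from rfl, (p 1).map_zero,
        norm_zero, zero_mul]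
  calc ‖u k‖ * r ^ k ≤ S * ‖rhsCoeff p u k‖ * r ^ k := by
        rw [hu]; gcongr; exact B.le_of_opNorm_le hB _
    _ ≤ S * ((∑ c : Composition k with c.length ≠ 1,
          ‖p c.length fun i => graphCoeff u (c.blocksFun i)‖ * r ^ k) +
        ‖p 1 fun _ => ((0 : E), if k = 1 then (1 : ℝ) else 0)‖ * r ^ k) := by
        rw [mul_assoc, ← sum_mul, ← add_mul]
        gcongr
        exact (norm_add_le _ _).trans (add_le_add_left (norm_sum_le _ _) _)
    _ ≤ _ := mul_le_mul_of_nonneg_left (add_le_add (sum_le_sum fun c _ => hterm c) hlin) hS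

theorem sum_norm_mul_pow_le {B : ℕ → E →L[ℝ] E} {u : ℕ → E} {S M r₀ r C : ℝ}
    (hu : ∀ k, 1 ≤ k → u k = B k (rhsCoeff p u k)) (hB : ∀ k, 1 ≤ k → ‖B k‖ ≤ S)
    (hM : ∀ n, ‖p n‖ * r₀ ^ n ≤ M) (hr₀ : 0 < r₀) (hr : 0 ≤ r) (hC : S * ‖p 1‖ + 1 ≤ C)
    (hr₁ : 2 * ((C + 1) * r) ≤ r₀) (hr₂ : 2 * S * M * (C + 1) ^ 2 * r ≤ r₀ ^ 2) (K : ℕ) :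
    ∑ k ∈ Ico 1 K, ‖u k‖ * r ^ k ≤ C * r := by
  have hS : 0 ≤ S := (norm_nonneg _).trans (hB 1 le_rfl)
  have hM0 : 0 ≤ M := (mul_nonneg (norm_nonneg _) (pow_nonneg hr₀.le 0)).trans (hM 0)
  have hC0 : 0 ≤ C := by nlinarith [norm_nonneg (p 1)]
  induction K with
  | zero => simpa using mul_nonneg hC0 hr
  | succ K ih =>
    set w : ℕ → ℝ := fun j => ‖graphCoeff u j‖ * r ^ j
    have hy : ∑ j ∈ Ico 1 K, w j ≤ (C + 1) * r :=
      (sum_norm_graphCoeff_mul_pow_le hr ih).trans_eq (by ring)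
    have hy0 : 0 ≤ ∑ j ∈ Ico 1 K, w j := sum_nonneg fun j _ => by positivity
    have htail := sum_Ico_two_mul_pow_le (fun n => norm_nonneg (p n)) hM hr₀ hy0
      (by linarith) (K + 1)
    have hquad : S * (2 * M * ((∑ j ∈ Ico 1 K, w j) / r₀) ^ 2) ≤ r := by
      calc S * (2 * M * ((∑ j ∈ Ico 1 K, w j) / r₀) ^ 2)
          ≤ S * (2 * M * ((C + 1) * r / r₀) ^ 2) := by gcongr
        _ = 2 * S * M * (C + 1) ^ 2 * r * r / r₀ ^ 2 := by ring
        _ ≤ r₀ ^ 2 * r / r₀ ^ 2 := by gcongr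
        _ = r := by field_simp
    calc ∑ k ∈ Ico 1 (K + 1), ‖u k‖ * r ^ k
        ≤ ∑ k ∈ Ico 1 (K + 1), S * ((∑ c : Composition k with c.length ≠ 1,
            ‖p c.length‖ * ∏ i, w (c.blocksFun i)) + if k = 1 then ‖p 1‖ * r else 0) :=
          sum_le_sum fun k hk => norm_mul_pow_le_of_eq_rhsCoeff p hr (hB k (mem_Ico.mp hk).1)
            (hu k (mem_Ico.mp hk).1)
      _ ≤ S * (2 * M * ((∑ j ∈ Ico 1 K, w j) / r₀) ^ 2 + ‖p 1‖ * r) := by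
          rw [← mul_sum, sum_add_distrib, sum_ite_eq']
          gcongr
          · exact (Composition.sum_sum_mul_prod_blocksFun_le (fun n => norm_nonneg _)
              (fun j => by positivity) K).trans htail
          · split_ifs
            · exact le_rfl
            · positivity
      _ ≤ C * r := by nlinarith [mul_nonneg hS (mul_nonneg (norm_nonneg (p 1)) hr)]

theorem radius_ofCoeff_pos {B : ℕ → E →L[ℝ] E} {u : ℕ → E} {S : ℝ}
    (hu : ∀ k, 1 ≤ k → u k = B k (rhsCoeff p u k)) (hB : ∀ k, 1 ≤ k → ‖B k‖ ≤ S)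
    (hp : 0 < p.radius) : 0 < (ofCoeff ℝ u).radius := by
  obtain ⟨r₀, hr₀, hr₀p⟩ := ENNReal.lt_iff_exists_nnreal_btwn.mp hp
  obtain ⟨M, -, hM⟩ := p.norm_mul_pow_le_of_lt_radius hr₀p
  set C := S * ‖p 1‖ + 1
  have hsmall : ∀ᶠ r : ℝ in 𝓝 0,
      2 * ((C + 1) * r) ≤ r₀ ∧ 2 * S * M * (C + 1) ^ 2 * r ≤ r₀ ^ 2 := by
    have hr₀' : (0 : ℝ) < r₀ := by exact_mod_cast hr₀
    refine (Tendsto.eventually_le_const hr₀' ?_).and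
      (Tendsto.eventually_le_const (pow_pos hr₀' 2) ?_) <;>
    exact Continuous.tendsto' (by fun_prop) _ _ (by simp)
  obtain ⟨r, ⟨hr₁, hr₂⟩, hr⟩ := (hsmall.and_frequently (frequently_gt_nhds 0)).exists
  lift r to ℝ≥0 using hr.le
  refine lt_of_lt_of_le (by exact_mod_cast hr) (le_radius_ofCoeff (D := C * r) fun K => ?_)
  exact sum_norm_mul_pow_le p hu hB hM (by exact_mod_cast hr₀) r.2 le_rfl hr₁ hr₂ K

end Majorant

theorem exists_analyticAt_solution {E : Type*} [NormedAddCommGroup E] [NormedSpace ℝ E]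
    [CompleteSpace E] {F : E × ℝ → E} {a : E} (hF : AnalyticAt ℝ F (a, 0)) (h0 : F (a, 0) = 0)
    (hspec : ∀ k : ℕ, 0 < k → (k : ℝ) ∉ spectrum ℝ (fderiv ℝ (fun x => F (x, 0)) a)) :
    ∃ x : ℝ → E, AnalyticAt ℝ x 0 ∧ x 0 = a ∧ ∀ᶠ t in 𝓝 0, t • deriv x t = F (x t, t) := by
  obtain ⟨p, R, hp⟩ := hF
  set A := fderiv ℝ (fun x => F (x, 0)) a
  have hp0 : p 0 = 0 := by ext v; exact (hp.hasFPowerSeriesAt.coeff_zero v).trans h0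
  obtain ⟨S, hS⟩ := spectrum.exists_norm_resolvent_natCast_le A
  obtain ⟨u, hu0, hu⟩ := exists_coeff_eq_rhsCoeff p (fun k => resolvent A (k : ℝ)) a
  have hcoeff := natCast_smul_eq_coeff_comp p hp0 hp.hasFPowerSeriesAt.fderiv_prodMk_left_apply
    (fun k hk => ContinuousLinearMap.smul_resolvent_sub_apply (hspec k hk)) hu
  have hrad := radius_ofCoeff_pos p hu (fun k _ => hS k) (hp.r_pos.trans_le hp.r_le)
  have hx := (ofCoeff ℝ u).hasFPowerSeriesOnBall hrad
  have hx0 : (ofCoeff ℝ u).sum 0 = a := by simpa [hu0, ofCoeff] using (hx.coeff_zero ![]).symm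
  have hgraph : HasFPowerSeriesOnBall (fun t => ((ofCoeff ℝ u).sum t, t))
      (ofCoeff ℝ (graphCoeff u)) 0 (ofCoeff ℝ u).radius := by
    have := hx.prod hasFPowerSeriesOnBall_ofCoeff_id
    rwa [min_top_right, ← ofCoeff_prodMk] at this
  have hFa : HasFPowerSeriesAt F p ((ofCoeff ℝ u).sum 0, 0) := by
    rw [hx0]; exact hp.hasFPowerSeriesAt
  obtain ⟨ρ, hρ⟩ := HasFPowerSeriesAt.comp (f := fun t => ((ofCoeff ℝ u).sum t, t)) hFa
    hgraph.hasFPowerSeriesAt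
  refine ⟨_, hx.analyticAt, hx0, ?_⟩
  filter_upwards [Metric.eball_mem_nhds 0 hρ.r_pos, Metric.eball_mem_nhds 0 hrad] with t hρt hxt
  have hlhs := (ofCoeff ℝ u).hasSum_smul_deriv_sum (t := t) (by simpa using hxt)
  have hrhs := hρ.hasSum hρt
  simp only [apply_eq_pow_smul_coeff, ← hcoeff, zero_add, Function.comp_apply] at hrhs
  simp only [coeff_ofCoeff] at hlhs
  exact hlhs.unique hrhs

end BriotBouquet

/-- Briot–Bouquet: for the singular system `t·xᵢ' = Fᵢ(x₁,x₂,t)`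
with `F` real-analytic near `(a,0)` and `F(a,0) = 0`, if no eigenvalue of the
Jacobian `(∂Fᵢ/∂xⱼ)` at `(a,0)` is a strictly positive integer, then there is a
real-analytic solution near `t = 0` with `x(0) = a`. -/
theorem stmt8 (F : (ℝ × ℝ) × ℝ → ℝ × ℝ) (a : ℝ × ℝ)
    (hF : AnalyticAt ℝ F (a, 0)) (h0 : F (a, 0) = 0)
    (J : Matrix (Fin 2) (Fin 2) ℝ)
    (hJ : J = !![(fderiv ℝ (fun x => F (x, 0)) a (1, 0)).1,
                 (fderiv ℝ (fun x => F (x, 0)) a (0, 1)).1;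
                 (fderiv ℝ (fun x => F (x, 0)) a (1, 0)).2,
                 (fderiv ℝ (fun x => F (x, 0)) a (0, 1)).2])
    (heig : ∀ k : ℕ, 0 < k → (k : ℂ) ∉ spectrum ℂ (J.map Complex.ofReal)) :
    ∃ x : ℝ → ℝ × ℝ, AnalyticAt ℝ x 0 ∧ x 0 = a ∧
      ∀ᶠ t in nhds (0 : ℝ), t • deriv x t = F (x t, t) := by
  refine BriotBouquet.exists_analyticAt_solution hF h0 fun k hk hmem => heig k hk ?_
  rw [ContinuousLinearMap.spectrum_eq_spectrum_matrix_finTwoProd, ← hJ] at hmem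
  exact_mod_cast (Matrix.map_mem_spectrum_map Complex.ofRealHom hmem :
    ((k : ℝ) : ℂ) ∈ spectrum ℂ (J.map Complex.ofReal))
end

section
/- Consider the torsion-free connection ∇ of Type I(n) on ℝ², given by ∇_{∂x}∂x = 0, ∇_{∂x}∂y = −γxⁿ ∂x, ∇_{∂y}∂y = −(1/n)εx^{2n+1} ∂x − φxⁿ ∂y, with n a positive integer. Then the vector fields A = (1/n)x∂x − y∂y and B = ∂y are Killing fields of ∇, and they satisfy [A,B] = B. Moreover, A and B are linearly independent exactly on the complement of the line {x = 0}. -/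
noncomputable section

open ContinuousLinearMap

/-- diagonal linear map -/
def Ld (a d : ℝ) : Pl →L[ℝ] Pl :=
  (a • fst ℝ ℝ ℝ).prod (d • snd ℝ ℝ ℝ)

@[simp] lemma Ld_fst (a d : ℝ) (z : Pl) : (Ld a d z).1 = a * z.1 := rfl
@[simp] lemma Ld_snd (a d : ℝ) (z : Pl) : (Ld a d z).2 = d * z.2 := rfl

lemma killing_of_diag (a d : ℝ) (x0 : Pl) (Γ1 Γ2 Γ3 : VF)
    (hΓ1 : ContDiff ℝ (⊤ : ℕ∞) Γ1) (hΓ2 : ContDiff ℝ (⊤ : ℕ∞) Γ2) (hΓ3 : ContDiff ℝ (⊤ : ℕ∞) Γ3)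
    (C1 : ∀ p : Pl, fderiv ℝ Γ1 p (x0 + Ld a d p) + (2*a) • Γ1 p = Ld a d (Γ1 p))
    (C2 : ∀ p : Pl, fderiv ℝ Γ2 p (x0 + Ld a d p) + (a+d) • Γ2 p = Ld a d (Γ2 p))
    (C3 : ∀ p : Pl, fderiv ℝ Γ3 p (x0 + Ld a d p) + (2*d) • Γ3 p = Ld a d (Γ3 p)) :
    IsKilling Γ1 Γ2 Γ3 (fun p => x0 + Ld a d p) := by
  intro Y Z hY hZ p
  have hXd : ∀ q : Pl, HasFDerivAt (fun q : Pl => x0 + Ld a d q) (Ld a d) q :=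
    fun q => (Ld a d).hasFDerivAt.const_add x0
  have hfX : fderiv ℝ (fun q : Pl => x0 + Ld a d q) = fun _ => Ld a d :=
    funext fun q => (hXd q).fderiv
  have hYd : ∀ q, HasFDerivAt Y (fderiv ℝ Y q) q :=
    fun q => (hY.differentiable (by simp) q).hasFDerivAt
  have hZd : ∀ q, HasFDerivAt Z (fderiv ℝ Z q) q :=
    fun q => (hZ.differentiable (by simp) q).hasFDerivAt
  have hZ' : ContDiff ℝ (⊤ : ℕ∞) (fderiv ℝ Z) := hZ.fderiv_right (by simp)
  have hZ'd : HasFDerivAt (fderiv ℝ Z) (fderiv ℝ (fderiv ℝ Z) p) p :=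
    (hZ'.differentiable (by simp) p).hasFDerivAt
  have hΓ1d : HasFDerivAt Γ1 (fderiv ℝ Γ1 p) p := (hΓ1.differentiable (by simp) p).hasFDerivAt
  have hΓ2d : HasFDerivAt Γ2 (fderiv ℝ Γ2 p) p := (hΓ2.differentiable (by simp) p).hasFDerivAt
  have hΓ3d : HasFDerivAt Γ3 (fderiv ℝ Γ3 p) p := (hΓ3.differentiable (by simp) p).hasFDerivAt
  -- lieB with X as explicit function
  have elgen : ∀ W : VF, lieB (fun q : Pl => x0 + Ld a d q) W
      = fun q => fderiv ℝ W q (x0 + Ld a d q) - Ld a d (W q) := by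
    intro W; funext q; simp [lieB, hfX]
  -- derivative of cov Y Z
  have Hcov : HasFDerivAt (fun q : Pl =>
      fderiv ℝ Z q (Y q)
        + ((Y q).1 * (Z q).1) • Γ1 q
        + ((Y q).1 * (Z q).2 + (Y q).2 * (Z q).1) • Γ2 q
        + ((Y q).2 * (Z q).2) • Γ3 q) _ p :=
    (((hZ'd.clm_apply (hYd p)).add
        (((hYd p).fst.mul (hZd p).fst).smul hΓ1d)).add
      ((((hYd p).fst.mul (hZd p).snd).add ((hYd p).snd.mul (hZd p).fst)).smul hΓ2d)).add
      (((hYd p).snd.mul (hZd p).snd).smul hΓ3d)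
  -- derivative of lieB X Z
  have HlZ : HasFDerivAt (fun q : Pl => fderiv ℝ Z q (x0 + Ld a d q) - Ld a d (Z q)) _ p :=
    (hZ'd.clm_apply (hXd p)).sub ((Ld a d).hasFDerivAt.comp p (hZd p))
  have hsymm : ∀ v w : Pl, fderiv ℝ (fderiv ℝ Z) p v w = fderiv ℝ (fderiv ℝ Z) p w v :=
    second_derivative_symmetric hZd hZ'd
  have covEq : cov Γ1 Γ2 Γ3 Y Z = fun q : Pl =>
      fderiv ℝ Z q (Y q)
        + ((Y q).1 * (Z q).1) • Γ1 q
        + ((Y q).1 * (Z q).2 + (Y q).2 * (Z q).1) • Γ2 q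
        + ((Y q).2 * (Z q).2) • Γ3 q := rfl
  simp only [elgen, covEq, cov]
  rw [Hcov.fderiv, HlZ.fderiv]
  have C1' := C1 p
  have C2' := C2 p
  have C3' := C3 p
  set v : Pl := x0 + Ld a d p with hv
  simp only [ContinuousLinearMap.add_apply, ContinuousLinearMap.sub_apply,
    ContinuousLinearMap.comp_apply, ContinuousLinearMap.flip_apply,
    ContinuousLinearMap.smulRight_apply, ContinuousLinearMap.smul_apply,
    ContinuousLinearMap.coe_fst', ContinuousLinearMap.coe_snd',
    map_add, map_sub, map_smul, Prod.fst_sub, Prod.snd_sub,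
    smul_eq_mul, Ld_fst, Ld_snd, Pi.mul_apply, Pi.add_apply]
  rw [hsymm (Y p) v]
  rw [← C1', ← C2', ← C3']
  module

-- derivative helpers for the concrete Christoffel symbols
lemma hpow_fst (k : ℕ) (p : Pl) :
    HasFDerivAt (fun q : Pl => q.1 ^ k) (((k : ℝ) * p.1 ^ (k-1)) • fst ℝ ℝ ℝ) p :=
  (hasDerivAt_pow k p.1).comp_hasFDerivAt p hasFDerivAt_fst

lemma hΓ2d (m : ℕ) (γ : ℝ) (p : Pl) :
    HasFDerivAt (fun q : Pl => (-(γ * q.1 ^ (m+1)), (0:ℝ)))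
      ((-(γ • (((m+1 : ℕ) : ℝ) * p.1 ^ m) • fst ℝ ℝ ℝ)).prod 0) p := by
  have h := (((hpow_fst (m+1) p).const_mul γ).neg).prodMk (hasFDerivAt_const (0:ℝ) p)
  simpa using h

lemma hΓ3d (m : ℕ) (ε φ : ℝ) (p : Pl) :
    HasFDerivAt (fun q : Pl => (-(ε / ((m+1 : ℕ) : ℝ) * q.1 ^ (2*(m+1)+1)), -(φ * q.1 ^ (m+1))))
      ((-((ε / ((m+1 : ℕ) : ℝ)) • (((2*(m+1)+1 : ℕ) : ℝ) * p.1 ^ (2*(m+1))) • fst ℝ ℝ ℝ)).prod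
        (-(φ • (((m+1 : ℕ) : ℝ) * p.1 ^ m) • fst ℝ ℝ ℝ))) p := by
  have h := (((hpow_fst (2*(m+1)+1) p).const_mul (ε / ((m+1 : ℕ) : ℝ))).neg).prodMk
      (((hpow_fst (m+1) p).const_mul φ).neg)
  simpa using h

/-- for the Type I(n) connection `∇_{∂x}∂x = 0`,
`∇_{∂x}∂y = −γxⁿ∂x`, `∇_{∂y}∂y = −(1/n)εx^{2n+1}∂x − φxⁿ∂y` (n a positive
integer), the fields `A = (1/n)x∂x − y∂y` and `B = ∂y` are Killing,
`[A,B] = B`, and `A, B` are linearly independent exactly off `{x = 0}`. -/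
theorem stmt9 (n : ℕ) (hn : 0 < n) (γ ε φ : ℝ) :
    IsKilling (fun _ => (0, 0)) (fun p => (-(γ * p.1 ^ n), 0))
        (fun p => (-(ε / n * p.1 ^ (2 * n + 1)), -(φ * p.1 ^ n)))
        (fun p => (p.1 / n, -p.2)) ∧
    IsKilling (fun _ => (0, 0)) (fun p => (-(γ * p.1 ^ n), 0))
        (fun p => (-(ε / n * p.1 ^ (2 * n + 1)), -(φ * p.1 ^ n)))
        (fun _ => (0, 1)) ∧
    (∀ p : Pl, lieB (fun p => (p.1 / n, -p.2)) (fun _ => ((0 : ℝ), (1 : ℝ))) p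
      = ((0 : ℝ), (1 : ℝ))) ∧
    (∀ p : Pl,
      LinearIndependent ℝ ![((p.1 / n, -p.2) : Pl), ((0, 1) : Pl)] ↔ p.1 ≠ 0) := by
  obtain ⟨m, rfl⟩ : ∃ m, n = m + 1 := ⟨n - 1, (Nat.succ_pred_eq_of_pos hn).symm⟩
  have hN : ((m + 1 : ℕ) : ℝ) ≠ 0 := Nat.cast_ne_zero.2 (Nat.succ_ne_zero m)
  have hN' : ((m : ℝ) + 1) ≠ 0 := by push_cast at hN; exact hN
  have hs1 : ContDiff ℝ (⊤ : ℕ∞) (fun _ : Pl => ((0:ℝ), (0:ℝ))) := contDiff_const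
  have hs2 : ContDiff ℝ (⊤ : ℕ∞) (fun p : Pl => (-(γ * p.1 ^ (m+1)), (0:ℝ))) :=
    ((contDiff_const.mul (contDiff_fst.pow _)).neg).prodMk contDiff_const
  have hs3 : ContDiff ℝ (⊤ : ℕ∞)
      (fun p : Pl => (-(ε / ((m+1:ℕ):ℝ) * p.1 ^ (2*(m+1)+1)), -(φ * p.1 ^ (m+1)))) :=
    ((contDiff_const.mul (contDiff_fst.pow _)).neg).prodMk
      ((contDiff_const.mul (contDiff_fst.pow _)).neg)
  have eA : (fun p : Pl => (p.1 / ((m+1:ℕ):ℝ), -p.2))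
      = fun p : Pl => ((0:ℝ),(0:ℝ)) + Ld (1/((m+1:ℕ):ℝ)) (-1) p := by
    funext p
    simp only [Prod.ext_iff, Prod.fst_add, Prod.snd_add, Ld_fst, Ld_snd]
    constructor
    · push_cast
      field_simp
      ring
    · push_cast
      ring
  have eB : (fun _ : Pl => ((0:ℝ),(1:ℝ)))
      = fun p : Pl => ((0:ℝ),(1:ℝ)) + Ld 0 0 p := by
    funext p
    simp only [Prod.ext_iff, Prod.fst_add, Prod.snd_add, Ld_fst, Ld_snd]
    norm_num
  refine ⟨?_, ?_, ?_, ?_⟩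
  · rw [eA]
    apply killing_of_diag _ _ _ _ _ _ hs1 hs2 hs3
    · intro p
      simp [Ld, Prod.ext_iff]
    · intro p
      rw [(hΓ2d m γ p).fderiv]
      simp only [Ld, ContinuousLinearMap.prod_apply, ContinuousLinearMap.smul_apply,
        ContinuousLinearMap.neg_apply, ContinuousLinearMap.coe_fst',
        ContinuousLinearMap.coe_snd', ContinuousLinearMap.zero_apply,
        Prod.ext_iff, Prod.fst_add, Prod.snd_add, Prod.smul_fst, Prod.smul_snd,
        smul_eq_mul]
      constructor
      · push_cast
        field_simp
        ring
      · push_cast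
        ring
    · intro p
      rw [(hΓ3d m ε φ p).fderiv]
      simp only [Ld, ContinuousLinearMap.prod_apply, ContinuousLinearMap.smul_apply,
        ContinuousLinearMap.neg_apply, ContinuousLinearMap.coe_fst',
        ContinuousLinearMap.coe_snd', ContinuousLinearMap.zero_apply,
        Prod.ext_iff, Prod.fst_add, Prod.snd_add, Prod.smul_fst, Prod.smul_snd,
        smul_eq_mul]
      constructor
      · push_cast
        field_simp
        ring
      · push_cast
        field_simp
        ring
  · rw [eB]
    apply killing_of_diag _ _ _ _ _ _ hs1 hs2 hs3
    · intro p
      simp [Ld, Prod.ext_iff]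
    · intro p
      rw [(hΓ2d m γ p).fderiv]
      simp [Ld, Prod.ext_iff]
    · intro p
      rw [(hΓ3d m ε φ p).fderiv]
      simp [Ld, Prod.ext_iff]
  · intro p
    have h1 : fderiv ℝ (fun p : Pl => (p.1 / ((m+1:ℕ):ℝ), -p.2)) p
        = Ld (1/((m+1:ℕ):ℝ)) (-1) := by
      rw [eA]
      exact ((Ld (1/((m+1:ℕ):ℝ)) (-1)).hasFDerivAt.const_add _).fderiv
    simp only [lieB]
    rw [h1]
    simp [Prod.ext_iff, Ld]
  · intro p
    rw [LinearIndependent.pair_iff]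
    constructor
    · intro h hp0
      have h2 := h 1 p.2 (by
        simp [Prod.ext_iff, hp0, Prod.smul_fst, Prod.smul_snd, smul_eq_mul])
      exact one_ne_zero h2.1
    · intro hp s t hst
      rw [Prod.ext_iff] at hst
      simp only [Prod.fst_add, Prod.snd_add, Prod.smul_fst, Prod.smul_snd,
        smul_eq_mul, Prod.fst_zero, Prod.snd_zero] at hst
      obtain ⟨h1, h2⟩ := hst
      have hs : s = 0 := by
        have hne : p.1 / ((m+1:ℕ):ℝ) ≠ 0 := div_ne_zero hp hN
        rcases mul_eq_zero.1 (by linarith [h1] : s * (p.1 / ((m+1:ℕ):ℝ)) = 0) with h | h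
        · exact h
        · exact absurd h hne
      refine ⟨hs, ?_⟩
      rw [hs] at h2
      linarith
end
end

section
/- On the half-plane {x > 0} ⊂ ℝ², the Lie algebra of vector fields commuting simultaneously with A = (1/n)x∂x − y∂y and B = ∂y (n ∈ ℝ, n ≠ 0) is two-dimensional, spanned by X = −(1/n)x∂x and Y = −x^{−n}∂y, and these satisfy [X,Y] = Y. -/
noncomputable section

open Real Set ContinuousLinearMap

def Lmap (n : ℝ) : Pl →L[ℝ] Pl :=
  ((n⁻¹ : ℝ) • (ContinuousLinearMap.fst ℝ ℝ ℝ)).prod (-(ContinuousLinearMap.snd ℝ ℝ ℝ))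

lemma Lmap_apply (n : ℝ) (q : Pl) : Lmap n q = (q.1 / n, -q.2) := by
  simp [Lmap, div_eq_inv_mul]

lemma fderiv_Amap (n : ℝ) (p : Pl) :
    fderiv ℝ (fun q : Pl => (q.1 / n, -q.2)) p = Lmap n := by
  have e : (fun q : Pl => (q.1 / n, -q.2)) = ⇑(Lmap n) :=
    funext fun q => (Lmap_apply n q).symm
  rw [e, (Lmap n).fderiv]

lemma combo_eq (n c d : ℝ) (q : Pl) :
    c • ((-(q.1 / n), 0) : Pl) + d • ((0, -(q.1 ^ (-n))) : Pl)
      = ((-(c * q.1 / n)), -(d * q.1 ^ (-n))) := by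
  simp only [Prod.ext_iff, Prod.smul_mk, Prod.mk_add_mk, smul_eq_mul]
  constructor <;> ring

lemma hasFDerivAt_W (n c d : ℝ) {p : Pl} (hp : 0 < p.1) :
    HasFDerivAt (fun q : Pl => ((-(c * q.1 / n)), -(d * q.1 ^ (-n))) : VF)
      (((-(c / n)) • (ContinuousLinearMap.fst ℝ ℝ ℝ)).prod
        ((d * n * p.1 ^ (-n - 1)) • (ContinuousLinearMap.fst ℝ ℝ ℝ))) p := by
  have h1 : HasFDerivAt (fun q : Pl => -(c * q.1 / n))
      ((-(c / n)) • (ContinuousLinearMap.fst ℝ ℝ ℝ)) p := by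
    have e : (fun q : Pl => -(c * q.1 / n)) = (fun q : Pl => (-(c / n)) * q.1) := by
      funext q; ring
    rw [e]; exact (hasFDerivAt_fst).const_mul _
  have h2 : HasFDerivAt (fun q : Pl => -(d * q.1 ^ (-n)))
      ((d * n * p.1 ^ (-n - 1)) • (ContinuousLinearMap.fst ℝ ℝ ℝ)) p := by
    have hr : HasDerivAt (fun x : ℝ => -(d * x ^ (-n))) (d * n * p.1 ^ (-n - 1)) p.1 := by
      have := ((Real.hasDerivAt_rpow_const (p := -n) (Or.inl hp.ne')).const_mul d).neg
      convert this using 1 <;> first | rfl | ring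
    exact hr.comp_hasFDerivAt p hasFDerivAt_fst
  exact h1.prodMk h2

lemma const_of_Ioi {f : ℝ → ℝ} (h : ∀ x ∈ Ioi (0 : ℝ), HasDerivAt f 0 x)
    {x : ℝ} (hx : x ∈ Ioi (0 : ℝ)) : f x = f 1 := by
  apply (convex_Ioi (0 : ℝ)).is_const_of_fderivWithin_eq_zero
    (fun y hy => ((h y hy).differentiableAt).differentiableWithinAt)
    (fun y hy => ?_) hx (by norm_num)
  rw [fderivWithin_of_isOpen isOpen_Ioi hy, (h y hy).hasFDerivAt.fderiv]
  ext; simp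

lemma forward_main (n : ℝ) (hn : n ≠ 0) (V : VF)
    (hV : ∀ p : Pl, 0 < p.1 → ContDiffAt ℝ (⊤ : ℕ∞) V p)
    (hA : ∀ p : Pl, 0 < p.1 → fderiv ℝ V p (p.1 / n, -p.2) = Lmap n (V p))
    (hB : ∀ p : Pl, 0 < p.1 → fderiv ℝ V p ((0 : ℝ), (1 : ℝ)) = 0) :
    ∀ p : Pl, 0 < p.1 →
      V p = ((V (1, 0)).1 * p.1, (V (1, 0)).2 * p.1 ^ (-n)) := by
  have hdiff : ∀ p : Pl, 0 < p.1 → DifferentiableAt ℝ V p :=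
    fun p hp => (hV p hp).differentiableAt (by simp)
  -- V is constant in the y variable
  have hy : ∀ x : ℝ, 0 < x → ∀ y : ℝ, V (x, y) = V (x, 0) := by
    intro x hx y
    have hline : ∀ y : ℝ, HasFDerivAt (fun y : ℝ => V (x, y))
        ((fderiv ℝ V (x, y)).comp
          (((0 : ℝ →L[ℝ] ℝ)).prod (ContinuousLinearMap.id ℝ ℝ))) y := by
      intro y
      exact ((hdiff (x, y) hx).hasFDerivAt).comp y
        ((hasFDerivAt_const x y).prodMk (hasFDerivAt_id y))
    apply is_const_of_fderiv_eq_zero (𝕜 := ℝ)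
      (fun y => (hline y).differentiableAt)
    intro y
    rw [(hline y).fderiv]
    apply ContinuousLinearMap.ext_ring
    simpa using hB (x, y) hx
  -- derivative of the curve x ↦ V (x, 0)
  have hcurve : ∀ x : ℝ, 0 < x → HasFDerivAt (fun x : ℝ => V (x, 0))
      ((fderiv ℝ V (x, 0)).comp
        ((ContinuousLinearMap.id ℝ ℝ).prod (0 : ℝ →L[ℝ] ℝ))) x := by
    intro x hx
    exact ((hdiff (x, 0) hx).hasFDerivAt).comp x
      ((hasFDerivAt_id x).prodMk (hasFDerivAt_const 0 x))
  have hder : ∀ x : ℝ, 0 < x →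
      HasDerivAt (fun x : ℝ => V (x, 0)) (fderiv ℝ V (x, 0) (1, 0)) x := by
    intro x hx
    have := (hcurve x hx).hasDerivAt
    simpa using this
  -- the ODEs from the A-bracket
  have key : ∀ x : ℝ, 0 < x →
      x * (fderiv ℝ V (x, 0) ((1 : ℝ), (0 : ℝ))).1 = (V (x, 0)).1 ∧
      x * (fderiv ℝ V (x, 0) ((1 : ℝ), (0 : ℝ))).2 = -n * (V (x, 0)).2 := by
    intro x hx
    have h0 := hA (x, 0) hx
    have e : ((x, (0:ℝ)).1 / n, -(x, (0:ℝ)).2) = (x / n) • (((1 : ℝ), (0 : ℝ)) : Pl) := by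
      simp [Prod.ext_iff]
    rw [e, map_smul, Lmap_apply] at h0
    have h1 := congrArg Prod.fst h0
    have h2 := congrArg Prod.snd h0
    simp only [Prod.smul_fst, Prod.smul_snd, smul_eq_mul] at h1 h2
    constructor
    · field_simp at h1 ⊢; linarith
    · field_simp at h2 ⊢; linarith
  -- solve the first ODE : f(x) = f(1) * x
  have sol1 : ∀ x : ℝ, 0 < x → (V (x, 0)).1 = (V (1, 0)).1 * x := by
    intro x hx
    have hu : ∀ z ∈ Ioi (0 : ℝ), HasDerivAt (fun x : ℝ => (V (x, 0)).1 * x⁻¹) 0 z := by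
      intro z hz
      rw [mem_Ioi] at hz
      have hf : HasDerivAt (fun x : ℝ => (V (x, 0)).1)
          ((fderiv ℝ V (z, 0) ((1:ℝ), (0:ℝ))).1) z := by
        have := ((ContinuousLinearMap.fst ℝ ℝ ℝ).hasFDerivAt.comp_hasDerivAt z (hder z hz))
        exact this
      have := hf.mul (hasDerivAt_inv hz.ne')
      refine this.congr_deriv ?_
      have k := (key z hz).1
      field_simp
      linear_combination k
    have := const_of_Ioi hu (mem_Ioi.mpr hx)
    simp only [inv_one, mul_one] at this
    field_simp at this
    linarith
  -- solve the second ODE : g(x) = g(1) * x ^ (-n)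
  have sol2 : ∀ x : ℝ, 0 < x → (V (x, 0)).2 = (V (1, 0)).2 * x ^ (-n) := by
    intro x hx
    have hu : ∀ z ∈ Ioi (0 : ℝ), HasDerivAt (fun x : ℝ => (V (x, 0)).2 * x ^ n) 0 z := by
      intro z hz
      rw [mem_Ioi] at hz
      have hg : HasDerivAt (fun x : ℝ => (V (x, 0)).2)
          ((fderiv ℝ V (z, 0) ((1:ℝ), (0:ℝ))).2) z := by
        have := ((ContinuousLinearMap.snd ℝ ℝ ℝ).hasFDerivAt.comp_hasDerivAt z (hder z hz))
        exact this
      have := hg.mul (Real.hasDerivAt_rpow_const (p := n) (Or.inl hz.ne'))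
      refine this.congr_deriv ?_
      have k := (key z hz).2
      have hzn : z ^ n = z ^ (n - 1) * z := by
        rw [← Real.rpow_add_one hz.ne']; ring_nf
      rw [hzn]
      linear_combination (z ^ (n-1)) * k
    have := const_of_Ioi hu (mem_Ioi.mpr hx)
    rw [Real.one_rpow, mul_one] at this
    have hxn : x ^ n * x ^ (-n) = 1 := by
      rw [← Real.rpow_add hx]; simp
    calc (V (x, 0)).2 = (V (x, 0)).2 * (x ^ n * x ^ (-n)) := by rw [hxn, mul_one]
      _ = ((V (x, 0)).2 * x ^ n) * x ^ (-n) := by ring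
      _ = (V (1, 0)).2 * x ^ (-n) := by rw [this]
  intro p hp
  have : V p = V (p.1, 0) := by
    rw [← hy p.1 hp p.2]
  rw [this]
  exact Prod.ext (sol1 p.1 hp) (sol2 p.1 hp)

/-- on the half-plane `{x > 0}`, the vector fields commuting with
both `A = (1/n)x∂x − y∂y` and `B = ∂y` (n ≠ 0) are exactly the linear
combinations of `X = −(1/n)x∂x` and `Y = −x^{−n}∂y`; moreover `[X,Y] = Y`. -/
theorem stmt10 (n : ℝ) (hn : n ≠ 0) :
    (∀ V : VF, (∀ p : Pl, 0 < p.1 → ContDiffAt ℝ (⊤ : ℕ∞) V p) →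
      ((∀ p : Pl, 0 < p.1 →
          lieB (fun q => (q.1 / n, -q.2)) V p = 0 ∧
          lieB (fun _ => ((0 : ℝ), (1 : ℝ))) V p = 0) ↔
        (∃ c d : ℝ, ∀ p : Pl, 0 < p.1 →
          V p = c • ((-(p.1 / n), 0) : Pl) + d • ((0, -(p.1 ^ (-n))) : Pl)))) ∧
    (∀ p : Pl, 0 < p.1 →
      lieB (fun q => (-(q.1 / n), 0)) (fun q => ((0 : ℝ), -(q.1 ^ (-n)))) p
        = ((0 : ℝ), -(p.1 ^ (-n)))) := by
  constructor
  · intro V hV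
    constructor
    · intro h
      have hA : ∀ p : Pl, 0 < p.1 → fderiv ℝ V p (p.1 / n, -p.2) = Lmap n (V p) := by
        intro p hp
        have h0 := (h p hp).1
        unfold lieB at h0
        rw [fderiv_Amap] at h0
        simpa [sub_eq_zero] using h0
      have hB : ∀ p : Pl, 0 < p.1 → fderiv ℝ V p ((0 : ℝ), (1 : ℝ)) = 0 := by
        intro p hp
        have h0 := (h p hp).2
        unfold lieB at h0
        simpa [fderiv_const] using h0
      refine ⟨-(n * (V (1, 0)).1), -(V (1, 0)).2, fun p hp => ?_⟩
      rw [forward_main n hn V hV hA hB p hp, combo_eq]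
      refine Prod.ext ?_ ?_ <;> simp <;> field_simp <;> ring
    · rintro ⟨c, d, hcd⟩ p hp
      have hev : V =ᶠ[nhds p]
          (fun q : Pl => ((-(c * q.1 / n)), -(d * q.1 ^ (-n)))) := by
        filter_upwards [(isOpen_lt continuous_const continuous_fst).mem_nhds hp] with q hq
        rw [hcd q hq, combo_eq]
      have hW := hasFDerivAt_W n c d hp
      have hfd : fderiv ℝ V p
          = (((-(c / n)) • (ContinuousLinearMap.fst ℝ ℝ ℝ)).prod
              ((d * n * p.1 ^ (-n - 1)) • (ContinuousLinearMap.fst ℝ ℝ ℝ))) :=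
        hev.fderiv_eq.trans hW.fderiv
      have hVp : V p = ((-(c * p.1 / n)), -(d * p.1 ^ (-n))) := by
        rw [hcd p hp, combo_eq]
      have hpow : p.1 ^ (-n - 1) * p.1 = p.1 ^ (-n) := by
        rw [← Real.rpow_add_one hp.ne']; norm_num
      constructor
      · unfold lieB
        rw [hfd, fderiv_Amap, hVp]
        simp only [ContinuousLinearMap.prod_apply, ContinuousLinearMap.coe_smul',
          ContinuousLinearMap.coe_fst', Pi.smul_apply, smul_eq_mul, Lmap_apply,
          Prod.mk_sub_mk, Prod.mk_eq_zero]
        constructor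
        · field_simp
          ring
        · rw [← hpow]; field_simp; ring
      · unfold lieB
        rw [hfd]
        simp [fderiv_const, Prod.ext_iff]
  · intro p hp
    have hpow : p.1 ^ (-n - 1) * p.1 = p.1 ^ (-n) := by
      rw [← Real.rpow_add_one hp.ne']; norm_num
    unfold lieB
    have eX : (fun q : Pl => ((-(q.1 / n), 0) : Pl))
        = (fun q : Pl => ((-((1:ℝ) * q.1 / n)), -((0:ℝ) * q.1 ^ (-n)))) := by
      funext q; simp
    have eY : (fun q : Pl => (((0 : ℝ), -(q.1 ^ (-n))) : Pl))
        = (fun q : Pl => ((-((0:ℝ) * q.1 / n)), -((1:ℝ) * q.1 ^ (-n)))) := by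
      funext q; simp
    rw [eX, eY, (hasFDerivAt_W n 1 0 hp).fderiv, (hasFDerivAt_W n 0 1 hp).fderiv]
    simp only [ContinuousLinearMap.prod_apply, ContinuousLinearMap.coe_smul',
      ContinuousLinearMap.coe_fst', Pi.smul_apply, smul_eq_mul,
      Prod.mk_sub_mk, Prod.mk.injEq]
    constructor
    · ring
    · rw [← hpow]; field_simp; ring
end
end

section
/- On the half-plane {x > 0} ⊂ ℝ², the Lie algebra of vector fields commuting simultaneously with A = (1/n)(x∂x + (1−n)y∂y) and B = x∂y (n ∈ ℝ, n ≠ 0) is two-dimensional, spanned by X = −(1/n)(x∂x + y∂y) and Y = −x^{1−n}∂y, and these satisfy [X,Y] = Y. -/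
noncomputable section

open ContinuousLinearMap

lemma clm_decomp {E : Type*} [NormedAddCommGroup E] [NormedSpace ℝ E]
    (L : Pl →L[ℝ] E) (u v : ℝ) : L (u, v) = u • L (1,0) + v • L (0,1) := by
  have h : ((u, v) : Pl) = u • ((1,0) : Pl) + v • ((0,1) : Pl) := by
    simp [Prod.ext_iff]
  rw [h, map_add, map_smul, map_smul]

lemma clm_eq_zero (L : Pl →L[ℝ] ℝ) (h1 : L (1,0) = 0) (h2 : L (0,1) = 0) : L = 0 := by
  apply ContinuousLinearMap.ext
  rintro ⟨u, v⟩
  rw [clm_decomp L u v]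
  simp [h1, h2]

lemma const_on {s : Set Pl} (hs : IsOpen s) (hc : Convex ℝ s) {F : Pl → ℝ}
    (h : ∀ p ∈ s, HasFDerivAt F (0 : Pl →L[ℝ] ℝ) p) {p q : Pl} (hp : p ∈ s) (hq : q ∈ s) :
    F p = F q := by
  have hd : DifferentiableOn ℝ F s := fun x hx => (h x hx).differentiableAt.differentiableWithinAt
  have hz : ∀ x ∈ s, fderivWithin ℝ F s x = 0 := by
    intro x hx
    rw [fderivWithin_of_isOpen hs hx]
    exact (h x hx).fderiv
  exact hc.is_const_of_fderivWithin_eq_zero hd hz hp hq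


set_option maxHeartbeats 2000000 in
/-- on the half-plane `{x > 0}`, the vector fields commuting with
both `A = (1/n)(x∂x + (1−n)y∂y)` and `B = x∂y` (n ≠ 0) are exactly the linear
combinations of `X = −(1/n)(x∂x + y∂y)` and `Y = −x^{1−n}∂y`; moreover
`[X,Y] = Y`. -/
theorem stmt11 (n : ℝ) (hn : n ≠ 0) :
    (∀ V : VF, (∀ p : Pl, 0 < p.1 → ContDiffAt ℝ (⊤ : ℕ∞) V p) →
      ((∀ p : Pl, 0 < p.1 →
          lieB (fun q => (q.1 / n, (1 - n) * q.2 / n)) V p = 0 ∧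
          lieB (fun q => ((0 : ℝ), q.1)) V p = 0) ↔
        (∃ c d : ℝ, ∀ p : Pl, 0 < p.1 →
          V p = c • ((-(p.1 / n), -(p.2 / n)) : Pl)
              + d • ((0, -(p.1 ^ (1 - n))) : Pl)))) ∧
    (∀ p : Pl, 0 < p.1 →
      lieB (fun q => (-(q.1 / n), -(q.2 / n)))
          (fun q => ((0 : ℝ), -(q.1 ^ (1 - n)))) p
        = ((0 : ℝ), -(p.1 ^ (1 - n)))) := by
  constructor
  · intro V hV
    constructor
    · intro hcm
      set s : Set Pl := {p : Pl | 0 < p.1} with hsdef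
      have hs : IsOpen s := isOpen_lt continuous_const continuous_fst
      have hconv : Convex ℝ s := by
        have : s = (Set.Ioi (0:ℝ)) ×ˢ (Set.univ : Set ℝ) := by
          ext p; simp [hsdef]
        rw [this]
        exact (convex_Ioi 0).prod convex_univ
      have h1s : ((1,0) : Pl) ∈ s := by norm_num [hsdef]
      have hVd : ∀ p ∈ s, DifferentiableAt ℝ V p := fun p hp => (hV p hp).differentiableAt (by simp)
      set LA : Pl →L[ℝ] Pl := ((1/n) • fst ℝ ℝ ℝ).prod (((1-n)/n) • snd ℝ ℝ ℝ) with hLA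
      have hAeq : (fun q : Pl => (q.1 / n, (1 - n) * q.2 / n)) = ⇑LA := by
        funext q; simp [hLA, Prod.ext_iff]; constructor <;> ring
      set LB : Pl →L[ℝ] Pl := (0 : Pl →L[ℝ] ℝ).prod (fst ℝ ℝ ℝ) with hLB
      have hBeq : (fun q : Pl => ((0 : ℝ), q.1)) = ⇑LB := by
        funext q; simp [hLB]
      -- scalar PDE consequences
      have hEB : ∀ p ∈ s, fderiv ℝ V p (0, p.1) = ((0:ℝ), (V p).1) := by
        intro p hp
        have h := (hcm p hp).2
        rw [lieB, sub_eq_zero, hBeq, ContinuousLinearMap.fderiv] at h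
        simpa [hLB] using h
      have hEA : ∀ p ∈ s, fderiv ℝ V p (p.1/n, (1-n)*p.2/n) = LA (V p) := by
        intro p hp
        have h := (hcm p hp).1
        rw [lieB, sub_eq_zero, hAeq, ContinuousLinearMap.fderiv] at h
        exact h
      have hfy : ∀ p ∈ s, (fderiv ℝ V p (0,1)).1 = 0 := by
        intro p hp
        have h := hEB p hp
        rw [clm_decomp] at h
        have h1 := congrArg Prod.fst h
        simp at h1
        rcases h1 with h1 | h1
        · exact absurd h1 (ne_of_gt hp)
        · exact h1
      have hgy : ∀ p ∈ s, p.1 * (fderiv ℝ V p (0,1)).2 = (V p).1 := by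
        intro p hp
        have h := hEB p hp
        rw [clm_decomp] at h
        have h1 := congrArg Prod.snd h
        simpa using h1
      have hfx : ∀ p ∈ s, p.1 * (fderiv ℝ V p (1,0)).1 = (V p).1 := by
        intro p hp
        have h := hEA p hp
        rw [clm_decomp] at h
        have h1 := congrArg Prod.fst h
        simp [hLA, hfy p hp] at h1
        have hinv : n * n⁻¹ = 1 := mul_inv_cancel₀ hn
        linear_combination n * h1 + ((V p).1 - p.1 * ((fderiv ℝ V p) (1, 0)).1) * hinv
      have hgx : ∀ p ∈ s, p.1 * (fderiv ℝ V p (1,0)).2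
          = (1-n) * ((V p).2 - p.2 * (fderiv ℝ V p (0,1)).2) := by
        intro p hp
        have h := hEA p hp
        rw [clm_decomp] at h
        have h1 := congrArg Prod.snd h
        simp [hLA] at h1
        have hinv : n * n⁻¹ = 1 := mul_inv_cancel₀ hn
        linear_combination n * h1 + ((1-n) * ((V p).2 - p.2 * ((fderiv ℝ V p) (0, 1)).2)
          - p.1 * ((fderiv ℝ V p) (1, 0)).2) * hinv
      -- stage F : (V p).1 = a * p.1
      have hFd : ∀ p ∈ s, HasFDerivAt (fun q : Pl => (V q).1 * q.1 ^ (-1 : ℝ))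
          (0 : Pl →L[ℝ] ℝ) p := by
        intro p hp
        have hx : p.1 ≠ 0 := ne_of_gt hp
        have h1 : HasFDerivAt (fun q : Pl => (V q).1) ((fst ℝ ℝ ℝ).comp (fderiv ℝ V p)) p :=
          (hVd p hp).hasFDerivAt.fst
        have h4 : HasFDerivAt (fun q : Pl => q.1 ^ (-1:ℝ))
            (((-1:ℝ) * p.1 ^ ((-1:ℝ) - 1)) • fst ℝ ℝ ℝ) p :=
          (Real.hasDerivAt_rpow_const (p := (-1:ℝ)) (Or.inl hx)).comp_hasFDerivAt p hasFDerivAt_fst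
        have h := h1.mul h4
        refine h.congr_fderiv ?_
        refine clm_eq_zero _ ?_ ?_
        · simp
          have k1 : p.1 ^ ((-1:ℝ) - 1) * p.1 = p.1 ^ (-1:ℝ) := by
            rw [← Real.rpow_add_one hx]; congr 1; ring
          linear_combination p.1 ^ ((-1:ℝ) - 1) * hfx p hp - ((fderiv ℝ V p) (1,0)).1 * k1
        · simp
          exact Or.inr (hfy p hp)
      set a : ℝ := (V (1,0)).1 with hadef
      have hfa : ∀ p ∈ s, (V p).1 = a * p.1 := by
        intro p hp
        have hx : p.1 ≠ 0 := ne_of_gt hp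
        have h := const_on hs hconv hFd hp h1s
        simp [Real.rpow_neg_one] at h
        field_simp at h
        rw [h, hadef]; ring
      -- stage H
      have hgy' : ∀ p ∈ s, (fderiv ℝ V p (0,1)).2 = a := by
        intro p hp
        have hx : p.1 ≠ 0 := ne_of_gt hp
        have h := hgy p hp
        rw [hfa p hp] at h
        exact mul_left_cancel₀ hx (h.trans (mul_comm a p.1))
      have hHd : ∀ p ∈ s, HasFDerivAt (fun q : Pl => ((V q).2 - a * q.2) * q.1 ^ (n - 1 : ℝ))
          (0 : Pl →L[ℝ] ℝ) p := by
        intro p hp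
        have hx : p.1 ≠ 0 := ne_of_gt hp
        have h1 : HasFDerivAt (fun q : Pl => (V q).2) ((snd ℝ ℝ ℝ).comp (fderiv ℝ V p)) p :=
          (hVd p hp).hasFDerivAt.snd
        have h2 : HasFDerivAt (fun q : Pl => a * q.2) (a • snd ℝ ℝ ℝ) p := by
          have := (hasFDerivAt_snd (𝕜 := ℝ) (p := p)).const_smul a
          exact (hasFDerivAt_snd (𝕜 := ℝ) (p := p)).const_mul a
        have h4 : HasFDerivAt (fun q : Pl => q.1 ^ (n - 1 : ℝ))
            (((n - 1) * p.1 ^ (n - 1 - 1 : ℝ)) • fst ℝ ℝ ℝ) p :=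
          (Real.hasDerivAt_rpow_const (p := (n-1:ℝ)) (Or.inl hx)).comp_hasFDerivAt p hasFDerivAt_fst
        have h := (h1.sub h2).mul h4
        refine h.congr_fderiv ?_
        refine clm_eq_zero _ ?_ ?_
        · simp
          have k1 : p.1 ^ (n - 1 - 1 : ℝ) * p.1 = p.1 ^ (n - 1 : ℝ) := by
            rw [← Real.rpow_add_one hx]; congr 1; ring
          have hgx2 : p.1 * (fderiv ℝ V p (1,0)).2 = (1-n) * ((V p).2 - p.2 * a) := by
            rw [← hgy' p hp]; exact hgx p hp
          linear_combination p.1 ^ (n-1-1:ℝ) * hgx2 - ((fderiv ℝ V p) (1,0)).2 * k1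
        · simp
          exact Or.inr (by rw [hgy' p hp]; ring)
      set d0 : ℝ := (V (1,0)).2 with hd0def
      have hgb : ∀ p ∈ s, (V p).2 = a * p.2 + d0 * p.1 ^ (1 - n : ℝ) := by
        intro p hp
        have hxpos : (0:ℝ) < p.1 := hp
        have h := const_on hs hconv hHd hp h1s
        simp [Real.one_rpow] at h
        have hone : p.1 ^ (n - 1 : ℝ) * p.1 ^ (1 - n : ℝ) = 1 := by
          rw [← Real.rpow_add hxpos, show (n-1) + (1-n) = (0:ℝ) by ring, Real.rpow_zero]
        linear_combination p.1 ^ (1-n:ℝ) * h - ((V p).2 - a * p.2) * hone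
      refine ⟨-(n * a), -d0, ?_⟩
      intro p hp
      have hx : p.1 ≠ 0 := ne_of_gt hp
      have h1 := hfa p hp
      have h2 := hgb p hp
      have hV1 : V p = ((V p).1, (V p).2) := rfl
      rw [hV1, h1, h2]
      simp [Prod.ext_iff]
      constructor
      · field_simp
        try ring
      · field_simp
        try ring
    · rintro ⟨c, d, hW⟩ p hp
      have hx : p.1 ≠ 0 := hp.ne'
      have hs : IsOpen {q : Pl | 0 < q.1} := isOpen_lt continuous_const continuous_fst
      set W : VF := fun q => c • ((-(q.1 / n), -(q.2 / n)) : Pl) + d • ((0, -(q.1 ^ (1 - n))) : Pl)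
        with hWdef
      have hev : V =ᶠ[nhds p] W :=
        Filter.eventuallyEq_of_mem (hs.mem_nhds hp) (fun q hq => hW q hq)
      have hfd : fderiv ℝ V p = fderiv ℝ W p := hev.fderiv_eq
      set LX : Pl →L[ℝ] Pl := ((-(1/n)) • fst ℝ ℝ ℝ).prod ((-(1/n)) • snd ℝ ℝ ℝ) with hLX
      have hXeq : (fun q : Pl => (-(q.1 / n), -(q.2 / n))) = ⇑LX := by
        funext q; simp [hLX, Prod.ext_iff]; constructor <;> ring
      have hXL : HasFDerivAt (fun q : Pl => (-(q.1 / n), -(q.2 / n))) LX p := by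
        rw [hXeq]; exact LX.hasFDerivAt
      have hpow : HasFDerivAt (fun q : Pl => q.1 ^ (1 - n))
          (((1 - n) * p.1 ^ (1 - n - 1)) • fst ℝ ℝ ℝ) p :=
        (Real.hasDerivAt_rpow_const (p := 1 - n) (Or.inl hx)).comp_hasFDerivAt p hasFDerivAt_fst
      have hY : HasFDerivAt (fun q : Pl => ((0 : ℝ), -(q.1 ^ (1 - n))))
          ((0 : Pl →L[ℝ] ℝ).prod (-(((1 - n) * p.1 ^ (1 - n - 1)) • fst ℝ ℝ ℝ))) p :=
        HasFDerivAt.prodMk (hasFDerivAt_const (0:ℝ) p) hpow.neg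
      have hWd : HasFDerivAt W
          (c • LX + d • ((0 : Pl →L[ℝ] ℝ).prod (-(((1 - n) * p.1 ^ (1 - n - 1)) • fst ℝ ℝ ℝ)))) p :=
        (hXL.const_smul c).add (hY.const_smul d)
      set LA : Pl →L[ℝ] Pl := ((1/n) • fst ℝ ℝ ℝ).prod (((1-n)/n) • snd ℝ ℝ ℝ) with hLA
      have hAeq : (fun q : Pl => (q.1 / n, (1 - n) * q.2 / n)) = ⇑LA := by
        funext q; simp [hLA, Prod.ext_iff]; constructor <;> ring
      set LB : Pl →L[ℝ] Pl := (0 : Pl →L[ℝ] ℝ).prod (fst ℝ ℝ ℝ) with hLB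
      have hBeq : (fun q : Pl => ((0 : ℝ), q.1)) = ⇑LB := by
        funext q; simp [hLB]
      have key : p.1 ^ (1 - n - 1) * p.1 = p.1 ^ (1 - n) := by
        rw [← Real.rpow_add_one hx]; congr 1; ring
      have hinv : n * n⁻¹ = 1 := mul_inv_cancel₀ hn
      have hVp : V p = W p := hW p hp
      constructor
      · rw [lieB, hfd, hWd.fderiv, hAeq, ContinuousLinearMap.fderiv, hVp]
        simp [hWdef, hLX, hLA, Prod.ext_iff]
        constructor
        · ring
        · have key2 : p.1 ^ (-n) * p.1 = p.1 ^ (1 - n) := by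
            rw [← Real.rpow_add_one hx]; congr 1; ring
          linear_combination (-(d * (1 - n)) / n) * key2
      · rw [lieB, hfd, hWd.fderiv, hBeq, ContinuousLinearMap.fderiv, hVp]
        simp [hWdef, hLX, hLB, Prod.ext_iff]
        ring
  · intro p hp
    have hx : p.1 ≠ 0 := hp.ne'
    set LX : Pl →L[ℝ] Pl := ((-(1/n)) • fst ℝ ℝ ℝ).prod ((-(1/n)) • snd ℝ ℝ ℝ) with hLX
    have hXeq : (fun q : Pl => (-(q.1 / n), -(q.2 / n))) = ⇑LX := by
      funext q
      simp [hLX, Prod.ext_iff]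
      constructor <;> ring
    have hpow : HasFDerivAt (fun q : Pl => q.1 ^ (1 - n))
        (((1 - n) * p.1 ^ (1 - n - 1)) • fst ℝ ℝ ℝ) p :=
      (Real.hasDerivAt_rpow_const (p := 1 - n) (Or.inl hx)).comp_hasFDerivAt p hasFDerivAt_fst
    have hY : HasFDerivAt (fun q : Pl => ((0 : ℝ), -(q.1 ^ (1 - n))))
        ((0 : Pl →L[ℝ] ℝ).prod (-(((1 - n) * p.1 ^ (1 - n - 1)) • fst ℝ ℝ ℝ))) p :=
      HasFDerivAt.prodMk (hasFDerivAt_const (0:ℝ) p) hpow.neg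
    have key : p.1 ^ (-n) * p.1 = p.1 ^ (1 - n) := by
      rw [← Real.rpow_add_one hx]
      congr 1
      ring
    rw [lieB, hY.fderiv, hXeq, ContinuousLinearMap.fderiv]
    simp [hLX, Prod.ext_iff]
    have hinv : n * n⁻¹ = 1 := mul_inv_cancel₀ hn
    linear_combination ((1 - n) / n) * key - p.1 ^ (1 - n) * hinv
end
end

section
/- Let ∇ be the connection of Type III on ℝ² with parameter γ ≠ 0, ε: ∇_{∂x}∂x = (−½εxy² + 2γy)∂x − ½εy³∂y, ∇_{∂x}∂y = (½εx²y − γx)∂x + (½εxy² + γy)∂y, ∇_{∂y}∂y = −½εx³∂x − (½εx²y + 2γx)∂y. Then every divergence-free linear vector field on ℝ² (i.e., (ax+by)∂x + (cx−ay)∂y for a,b,c ∈ ℝ) is a Killing field of ∇. -/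
noncomputable section

/-- `∇_{∂x}∂x` for the Type III connection with parameters `(γ, ε)`. -/
def G11 (γ ε : ℝ) : VF := fun p =>
  (-(ε / 2) * p.1 * p.2 ^ 2 + 2 * γ * p.2, -(ε / 2) * p.2 ^ 3)
/-- `∇_{∂x}∂y` for the Type III connection with parameters `(γ, ε)`. -/
def G12 (γ ε : ℝ) : VF := fun p =>
  ((ε / 2) * p.1 ^ 2 * p.2 - γ * p.1, (ε / 2) * p.1 * p.2 ^ 2 + γ * p.2)
/-- `∇_{∂y}∂y` for the Type III connection with parameters `(γ, ε)`. -/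
def G22 (γ ε : ℝ) : VF := fun p =>
  (-(ε / 2) * p.1 ^ 3, -((ε / 2) * p.1 ^ 2 * p.2 + 2 * γ * p.1))

section Aux

open ContinuousLinearMap

/-- The linear field as a continuous linear map. -/
def XL (a b c : ℝ) : Pl →L[ℝ] Pl :=
  (a • ContinuousLinearMap.fst ℝ ℝ ℝ + b • ContinuousLinearMap.snd ℝ ℝ ℝ).prod
    (c • ContinuousLinearMap.fst ℝ ℝ ℝ - a • ContinuousLinearMap.snd ℝ ℝ ℝ)

@[simp] lemma XL_apply (a b c : ℝ) (v : Pl) :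
    XL a b c v = (a * v.1 + b * v.2, c * v.1 - a * v.2) := by
  simp [XL, smul_eq_mul]

lemma hasF_sq1 (q : Pl) :
    HasFDerivAt (fun p : Pl => p.1 ^ 2) ((2 * q.1) • ContinuousLinearMap.fst ℝ ℝ ℝ) q := by
  have h := (hasFDerivAt_fst (𝕜 := ℝ) (p := q) (E := ℝ) (F := ℝ)).mul
    (hasFDerivAt_fst (𝕜 := ℝ) (p := q) (E := ℝ) (F := ℝ))
  convert h using 1
  all_goals try with_reducible_and_instances rfl
  · funext p; exact pow_two _
  · rw [two_mul, add_smul]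

lemma hasF_sq2 (q : Pl) :
    HasFDerivAt (fun p : Pl => p.2 ^ 2) ((2 * q.2) • ContinuousLinearMap.snd ℝ ℝ ℝ) q := by
  have h := (hasFDerivAt_snd (𝕜 := ℝ) (p := q) (E := ℝ) (F := ℝ)).mul
    (hasFDerivAt_snd (𝕜 := ℝ) (p := q) (E := ℝ) (F := ℝ))
  convert h using 1
  all_goals try with_reducible_and_instances rfl
  · funext p; exact pow_two _
  · rw [two_mul, add_smul]

lemma hasF_cube1 (q : Pl) :
    HasFDerivAt (fun p : Pl => p.1 ^ 3) ((3 * q.1 ^ 2) • ContinuousLinearMap.fst ℝ ℝ ℝ) q := by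
  have h := ((hasFDerivAt_fst (𝕜 := ℝ) (p := q) (E := ℝ) (F := ℝ)).mul
    (hasFDerivAt_fst (𝕜 := ℝ) (p := q) (E := ℝ) (F := ℝ))).mul
    (hasFDerivAt_fst (𝕜 := ℝ) (p := q) (E := ℝ) (F := ℝ))
  convert h using 1
  all_goals try with_reducible_and_instances rfl
  · funext p; simp only [Pi.mul_apply, Pi.pow_apply]; ring
  · ext v <;> simp [smul_smul] <;> ring

lemma hasF_cube2 (q : Pl) :
    HasFDerivAt (fun p : Pl => p.2 ^ 3) ((3 * q.2 ^ 2) • ContinuousLinearMap.snd ℝ ℝ ℝ) q := by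
  have h := ((hasFDerivAt_snd (𝕜 := ℝ) (p := q) (E := ℝ) (F := ℝ)).mul
    (hasFDerivAt_snd (𝕜 := ℝ) (p := q) (E := ℝ) (F := ℝ))).mul
    (hasFDerivAt_snd (𝕜 := ℝ) (p := q) (E := ℝ) (F := ℝ))
  convert h using 1
  all_goals try with_reducible_and_instances rfl
  · funext p; simp only [Pi.mul_apply, Pi.pow_apply]; ring
  · ext v <;> simp [smul_smul] <;> ring

lemma repL (L : Pl →L[ℝ] Pl) (u1 u2 : Pl) (h1 : L (1, 0) = u1) (h2 : L (0, 1) = u2) :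
    ∀ v : Pl, L v = (v.1 * u1.1 + v.2 * u2.1, v.1 * u1.2 + v.2 * u2.2) := by
  intro v
  have hv : (v.1 • ((1 : ℝ), (0 : ℝ)) + v.2 • ((0 : ℝ), (1 : ℝ)) : Pl) = v := by
    ext <;> simp
  rw [← hv, map_add, L.map_smul, L.map_smul, h1, h2]
  ext <;> simp

lemma repB (B : Pl →L[ℝ] Pl →L[ℝ] Pl) (q11 q12 q21 q22 : Pl)
    (h11 : B (1, 0) (1, 0) = q11) (h12 : B (1, 0) (0, 1) = q12)
    (h21 : B (0, 1) (1, 0) = q21) (h22 : B (0, 1) (0, 1) = q22) :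
    ∀ v w : Pl, B v w =
      (v.1 * (w.1 * q11.1 + w.2 * q12.1) + v.2 * (w.1 * q21.1 + w.2 * q22.1),
       v.1 * (w.1 * q11.2 + w.2 * q12.2) + v.2 * (w.1 * q21.2 + w.2 * q22.2)) := by
  intro v w
  have h1 := repL (B (1, 0)) q11 q12 h11 h12 w
  have h2 := repL (B (0, 1)) q21 q22 h21 h22 w
  have hv : (v.1 • ((1 : ℝ), (0 : ℝ)) + v.2 • ((0 : ℝ), (1 : ℝ)) : Pl) = v := by
    ext <;> simp
  rw [← hv, map_add, map_smul, map_smul, ContinuousLinearMap.add_apply,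
    ContinuousLinearMap.smul_apply, ContinuousLinearMap.smul_apply, h1, h2]
  ext <;> simp <;> ring

end Aux

/-- every divergence-free linear vector field
`(ax+by)∂x + (cx−ay)∂y` is a Killing field of the Type III connection
with parameters `γ ≠ 0`, `ε`. -/
theorem stmt12 (γ ε : ℝ) (hγ : γ ≠ 0) (a b c : ℝ) :
    IsKilling (G11 γ ε) (G12 γ ε) (G22 γ ε)
      (fun p => (a * p.1 + b * p.2, c * p.1 - a * p.2)) := by
  intro Y Z hYc hZc p
  set X : VF := fun p => (a * p.1 + b * p.2, c * p.1 - a * p.2) with hXdef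
  have hYd : Differentiable ℝ Y := hYc.differentiable (by simp)
  have hZd : Differentiable ℝ Z := hZc.differentiable (by simp)
  have hZ1 : ContDiff ℝ 1 (fderiv ℝ Z) := hZc.fderiv_right (by norm_cast)
  have hZ'd : Differentiable ℝ (fderiv ℝ Z) := hZ1.differentiable one_ne_zero
  have hY : HasFDerivAt Y (fderiv ℝ Y p) p := (hYd p).hasFDerivAt
  have hZ : ∀ q, HasFDerivAt Z (fderiv ℝ Z q) q := fun q => (hZd q).hasFDerivAt
  have hZ2 : HasFDerivAt (fderiv ℝ Z) (fderiv ℝ (fderiv ℝ Z) p) p := (hZ'd p).hasFDerivAt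
  have hsymm : ∀ v w, fderiv ℝ (fderiv ℝ Z) p v w = fderiv ℝ (fderiv ℝ Z) p w v :=
    second_derivative_symmetric hZ hZ2
  have hX : ∀ q, HasFDerivAt X (XL a b c) q := fun q =>
    ((hasFDerivAt_fst.const_mul a).add (hasFDerivAt_snd.const_mul b)).prodMk
      ((hasFDerivAt_fst.const_mul c).sub (hasFDerivAt_snd.const_mul a))
  have hXf : ∀ q, fderiv ℝ X q = XL a b c := fun q => (hX q).fderiv
  have hlz : lieB X Z = fun q => fderiv ℝ Z q (X q) - XL a b c (Z q) := by
    funext q; simp only [lieB, hXf]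
  have hly : lieB X Y = fun q => fderiv ℝ Y q (X q) - XL a b c (Y q) := by
    funext q; simp only [lieB, hXf]
  -- Christoffel derivatives
  have hG11 : HasFDerivAt (G11 γ ε) _ p :=
    (((hasFDerivAt_fst.const_mul (-(ε / 2))).mul (hasF_sq2 p)).add
      (hasFDerivAt_snd.const_mul (2 * γ))).prodMk ((hasF_cube2 p).const_mul (-(ε / 2)))
  have hG12 : HasFDerivAt (G12 γ ε) _ p :=
    ((((hasF_sq1 p).const_mul (ε / 2)).mul hasFDerivAt_snd).sub
      (hasFDerivAt_fst.const_mul γ)).prodMk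
      (((hasFDerivAt_fst.const_mul (ε / 2)).mul (hasF_sq2 p)).add
        (hasFDerivAt_snd.const_mul γ))
  have hG22 : HasFDerivAt (G22 γ ε) _ p :=
    ((hasF_cube1 p).const_mul (-(ε / 2))).prodMk
      ((((hasF_sq1 p).const_mul (ε / 2)).mul hasFDerivAt_snd).add
        (hasFDerivAt_fst.const_mul (2 * γ))).neg
  -- derivative of cov Y Z
  have hF1 := (((hZ2.clm_apply hY).add
      (((hY.fst).mul ((hZ p).fst)).smul hG11)).add
      ((((hY.fst).mul ((hZ p).snd)).add ((hY.snd).mul ((hZ p).fst))).smul hG12)).add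
      (((hY.snd).mul ((hZ p).snd)).smul hG22)
  have eF1 : fderiv ℝ (cov (G11 γ ε) (G12 γ ε) (G22 γ ε) Y Z) p = _ := hF1.fderiv
  -- derivative of lieB X Z
  have hF2 := (hZ2.clm_apply (hX p)).sub ((XL a b c).hasFDerivAt.comp p (hZ p))
  have eF2 : fderiv ℝ (fun q => fderiv ℝ Z q (X q) - XL a b c (Z q)) p = _ := hF2.fderiv
  rw [hlz, hly]
  simp only [lieB, cov, hXf]
  rw [eF1, eF2]
  obtain ⟨u1, hu1⟩ : ∃ u, fderiv ℝ Y p (1, 0) = u := ⟨_, rfl⟩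
  obtain ⟨u2, hu2⟩ : ∃ u, fderiv ℝ Y p (0, 1) = u := ⟨_, rfl⟩
  obtain ⟨v1, hv1⟩ : ∃ u, fderiv ℝ Z p (1, 0) = u := ⟨_, rfl⟩
  obtain ⟨v2, hv2⟩ : ∃ u, fderiv ℝ Z p (0, 1) = u := ⟨_, rfl⟩
  obtain ⟨q11, h11⟩ : ∃ u, fderiv ℝ (fderiv ℝ Z) p (1, 0) (1, 0) = u := ⟨_, rfl⟩
  obtain ⟨q12, h12⟩ : ∃ u, fderiv ℝ (fderiv ℝ Z) p (1, 0) (0, 1) = u := ⟨_, rfl⟩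
  obtain ⟨q21, h21⟩ : ∃ u, fderiv ℝ (fderiv ℝ Z) p (0, 1) (1, 0) = u := ⟨_, rfl⟩
  obtain ⟨q22, h22⟩ : ∃ u, fderiv ℝ (fderiv ℝ Z) p (0, 1) (0, 1) = u := ⟨_, rfl⟩
  have hq : q12 = q21 := by rw [← h12, ← h21]; exact hsymm _ _
  have hrY := repL (fderiv ℝ Y p) u1 u2 hu1 hu2
  have hrZ := repL (fderiv ℝ Z p) v1 v2 hv1 hv2
  have hrB := repB (fderiv ℝ (fderiv ℝ Z) p) q11 q12 q21 q22 h11 h12 h21 h22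
  simp only [ContinuousLinearMap.add_apply, ContinuousLinearMap.sub_apply,
    ContinuousLinearMap.smul_apply, ContinuousLinearMap.comp_apply,
    ContinuousLinearMap.coe_comp', Function.comp_apply, ContinuousLinearMap.flip_apply,
    ContinuousLinearMap.smulRight_apply, ContinuousLinearMap.prod_apply,
    ContinuousLinearMap.coe_fst', ContinuousLinearMap.coe_snd',
    ContinuousLinearMap.neg_apply, XL_apply, hXdef, G11, G12, G22,
    smul_eq_mul, map_add, map_sub, map_smul, Pi.mul_apply, Pi.add_apply]
  simp only [hrY, hrZ, hrB]
  subst hq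
  apply Prod.ext <;>
    simp only [Prod.fst_add, Prod.snd_add, Prod.fst_sub, Prod.snd_sub,
      Prod.smul_fst, Prod.smul_snd, Prod.mk_add_mk, Prod.mk_sub_mk, Prod.smul_mk,
      smul_eq_mul] <;>
    ring
end
end

section
/- Let ∇ be an SL(2,ℝ)-invariant connection of Type III on ℝ² with parameters (γ, ε). Along a geodesic v(s) = (x(s), y(s)) that is not a radial line, the quantity u(s) = x y' − y x' satisfies the ODE u' = 2γ u², whose solution with initial value u₀ ≠ 0 is u(s) = u₀ / (1 − 2γ u₀ s). In particular, if γ ≠ 0 this solution blows up in finite time, so the connection is not geodesically complete. -/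
noncomputable section

/-- The geodesic equation `v'' + Γ(v')(v') = 0` at time `s`. -/
def GeodEq (γ ε : ℝ) (v : ℝ → Pl) (s : ℝ) : Prop :=
  deriv (deriv v) s
      + ((deriv v s).1 * (deriv v s).1) • G11 γ ε (v s)
      + (2 * ((deriv v s).1 * (deriv v s).2)) • G12 γ ε (v s)
      + ((deriv v s).2 * (deriv v s).2) • G22 γ ε (v s) = 0

/-- `u = x y' − y x'` along a curve `v`. -/
def uQ (v : ℝ → Pl) : ℝ → ℝ := fun t =>
  (v t).1 * (deriv v t).2 - (v t).2 * (deriv v t).1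

lemma hdFst {f : ℝ → Pl} {f' : Pl} {x : ℝ} (h : HasDerivAt f f' x) :
    HasDerivAt (fun t => (f t).1) f'.1 x :=
  ((ContinuousLinearMap.fst ℝ ℝ ℝ).hasFDerivAt.comp_hasDerivAt x h)

lemma hdSnd {f : ℝ → Pl} {f' : Pl} {x : ℝ} (h : HasDerivAt f f' x) :
    HasDerivAt (fun t => (f t).2) f'.2 x :=
  ((ContinuousLinearMap.snd ℝ ℝ ℝ).hasFDerivAt.comp_hasDerivAt x h)

lemma key (γ ε : ℝ) (v : ℝ → Pl) (hv : ContDiff ℝ (⊤ : ℕ∞) v) (hg : ∀ s, GeodEq γ ε v s)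
    (s : ℝ) : HasDerivAt (uQ v) (2 * γ * (uQ v s) ^ 2) s := by
  have hvc : ContDiff ℝ ((⊤:ℕ∞):WithTop ℕ∞) v := hv.of_le (by simp)
  have hv' := contDiff_infty_iff_deriv.mp hvc
  have hD : HasDerivAt v (deriv v s) s := (hv'.1 s).hasDerivAt
  have hDD : HasDerivAt (deriv v) (deriv (deriv v) s) s :=
    ((hv'.2.differentiable (by simp)) s).hasDerivAt
  set P := v s with hP
  set D := deriv v s with hDfn
  set A := deriv (deriv v) s with hA
  have h1 : HasDerivAt (fun t => (v t).1) D.1 s := hdFst hD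
  have h2 : HasDerivAt (fun t => (v t).2) D.2 s := hdSnd hD
  have h3 : HasDerivAt (fun t => (deriv v t).1) A.1 s := hdFst hDD
  have h4 : HasDerivAt (fun t => (deriv v t).2) A.2 s := hdSnd hDD
  have hu : HasDerivAt (uQ v)
      ((D.1 * D.2 + P.1 * A.2) - (D.2 * D.1 + P.2 * A.1)) s := by
    exact (h1.mul h4).sub (h2.mul h3)
  have hge : A + (D.1 * D.1) • G11 γ ε P + (2 * (D.1 * D.2)) • G12 γ ε P
      + (D.2 * D.2) • G22 γ ε P = 0 := hg s
  have hf := congrArg Prod.fst hge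
  have hs := congrArg Prod.snd hge
  simp only [Prod.fst_add, Prod.snd_add, Prod.smul_fst, Prod.smul_snd, Prod.fst_zero,
    Prod.snd_zero, smul_eq_mul] at hf hs
  have e1 : A.1 = -(D.1 * D.1 * (G11 γ ε P).1 + 2 * (D.1 * D.2) * (G12 γ ε P).1
      + D.2 * D.2 * (G22 γ ε P).1) := by linarith
  have e2 : A.2 = -(D.1 * D.1 * (G11 γ ε P).2 + 2 * (D.1 * D.2) * (G12 γ ε P).2
      + D.2 * D.2 * (G22 γ ε P).2) := by linarith
  convert hu using 1
  rw [e1, e2]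
  simp only [G11, G12, G22, uQ, ← hP, ← hDfn]
  ring
/-- along any non-radial geodesic of the Type III connection the
quantity `u = xy' − yx'` satisfies `u' = 2γu²`; the solution of this ODE with
initial value `u₀` is `u₀/(1 − 2γu₀s)`; and if `γ ≠ 0` the connection is not
geodesically complete. -/
theorem stmt15 (γ ε : ℝ) :
    (∀ v : ℝ → Pl, ContDiff ℝ (⊤ : ℕ∞) v → (∀ s, GeodEq γ ε v s) →
      (∀ s, LinearIndependent ℝ ![v s, deriv v s]) →
      ∀ s, deriv (uQ v) s = 2 * γ * (uQ v s) ^ 2) ∧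
    (∀ u₀ : ℝ, u₀ ≠ 0 →
      u₀ / (1 - 2 * γ * u₀ * 0) = u₀ ∧
      ∀ s : ℝ, 1 - 2 * γ * u₀ * s ≠ 0 →
        deriv (fun t => u₀ / (1 - 2 * γ * u₀ * t)) s
          = 2 * γ * (u₀ / (1 - 2 * γ * u₀ * s)) ^ 2) ∧
    (γ ≠ 0 → ¬ ∀ p q : Pl, ∃ v : ℝ → Pl,
      ContDiff ℝ (⊤ : ℕ∞) v ∧ v 0 = p ∧ deriv v 0 = q ∧ ∀ s, GeodEq γ ε v s) := by
  refine ⟨fun v hv hg _ s => (key γ ε v hv hg s).deriv, fun u₀ hu₀ => ⟨by norm_num, ?_⟩, ?_⟩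
  · intro s hs
    have hd : HasDerivAt (fun t => 1 - 2 * γ * u₀ * t) (-(2 * γ * u₀)) s := by
      simpa using ((hasDerivAt_id s).const_mul (2 * γ * u₀)).const_sub 1
    have h := ((hasDerivAt_const s u₀).div hd hs).deriv
    erw [h]
    field_simp
    ring
  · intro hγ H
    obtain ⟨v, hv, hv0, hq0, hg⟩ := H (1, 0) (0, 1)
    set u : ℝ → ℝ := uQ v with hu
    have hder : ∀ s, HasDerivAt u (2 * γ * (u s) ^ 2) s := key γ ε v hv hg
    have hdiff : Differentiable ℝ u := fun s => (hder s).differentiableAt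
    have hderiv : ∀ s, deriv u s = 2 * γ * (u s) ^ 2 := fun s => (hder s).deriv
    have hu0 : u 0 = 1 := by simp [hu, uQ, hv0, hq0]
    set T : ℝ := 1 / (2 * γ) with hT
    -- u ≥ 1 on uIcc 0 T
    have hone : ∀ x ∈ Set.uIcc (0:ℝ) T, 1 ≤ u x := by
      intro x hx
      rcases lt_or_gt_of_ne hγ with hneg | hpos
      · have hmono : Antitone u := by
          apply antitone_of_deriv_nonpos hdiff
          intro y
          rw [hderiv]
          nlinarith [sq_nonneg (u y)]
        have hT0 : T ≤ 0 := by
          rw [hT]; apply div_nonpos_of_nonneg_of_nonpos <;> nlinarith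
        have : x ≤ 0 := by
          rcases Set.mem_uIcc.mp hx with h | h
          · linarith [h.2, hT0]
          · exact h.2
        calc 1 = u 0 := hu0.symm
        _ ≤ u x := hmono this
      · have hmono : Monotone u := by
          apply monotone_of_deriv_nonneg hdiff
          intro y
          rw [hderiv]
          nlinarith [sq_nonneg (u y)]
        have hT0 : 0 ≤ T := by positivity
        have : 0 ≤ x := by
          rcases Set.mem_uIcc.mp hx with h | h
          · exact h.1
          · linarith [h.1, hT0]
        calc 1 = u 0 := hu0.symm
        _ ≤ u x := hmono this
    have hne : ∀ x ∈ Set.uIcc (0:ℝ) T, u x ≠ 0 := fun x hx => by linarith [hone x hx]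
    set g : ℝ → ℝ := fun s => (u s)⁻¹ + 2 * γ * s with hg'
    have hgd : ∀ x ∈ Set.uIcc (0:ℝ) T, HasDerivAt g 0 x := by
      intro x hx
      have h1 : HasDerivAt (fun s => (u s)⁻¹)
          (-(2 * γ * (u x) ^ 2) / (u x) ^ 2) x := (hder x).inv (hne x hx)
      have h2 : HasDerivAt (fun s => 2 * γ * s) (2 * γ) x := by
        simpa using (hasDerivAt_id x).const_mul (2 * γ)
      have := h1.add h2
      convert this using 1 <;> try rfl
      have := hne x hx
      field_simp
      ring
    have hcont : ContinuousOn g (Set.uIcc 0 T) := by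
      apply ContinuousOn.add
      · exact ContinuousOn.inv₀ hdiff.continuous.continuousOn hne
      · exact (continuous_const.mul continuous_id).continuousOn
    have hsub : interior (Set.uIcc (0:ℝ) T) ⊆ Set.uIcc 0 T := interior_subset
    have hdiffOn : DifferentiableOn ℝ g (interior (Set.uIcc (0:ℝ) T)) :=
      fun x hx => ((hgd x (hsub hx)).differentiableAt).differentiableWithinAt
    have hzero : ∀ x ∈ interior (Set.uIcc (0:ℝ) T), deriv g x = 0 :=
      fun x hx => (hgd x (hsub hx)).deriv
    have hmonoOn : MonotoneOn g (Set.uIcc 0 T) :=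
      monotoneOn_of_deriv_nonneg (convex_uIcc 0 T) hcont hdiffOn
        (fun x hx => le_of_eq (hzero x hx).symm)
    have hantiOn : AntitoneOn g (Set.uIcc 0 T) :=
      antitoneOn_of_deriv_nonpos (convex_uIcc 0 T) hcont hdiffOn
        (fun x hx => le_of_eq (hzero x hx))
    have h0m : (0:ℝ) ∈ Set.uIcc (0:ℝ) T := Set.left_mem_uIcc
    have hTm : T ∈ Set.uIcc (0:ℝ) T := Set.right_mem_uIcc
    have hEq : g 0 = g T := by
      rcases le_total (0:ℝ) T with h | h
      · exact le_antisymm (hmonoOn h0m hTm h) (hantiOn h0m hTm h)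
      · exact le_antisymm (hantiOn hTm h0m h) (hmonoOn hTm h0m h)
    have e0 : g 0 = 1 := by simp [hg', hu0]
    have eT : g T = (u T)⁻¹ + 1 := by
      have : 2 * γ * T = 1 := by rw [hT]; field_simp
      simp [hg', this]
    have huT : 1 ≤ u T := hone T hTm
    have : (u T)⁻¹ > 0 := inv_pos.mpr (by linarith)
    rw [e0, eT] at hEq
    linarith
end
end

section
/- Let ∇ be a real-analytic torsion-free affine connection defined near the origin of ℝⁿ admitting n pairwise commuting Killing vector fields X₁, …, Xₙ that all vanish at the origin but are linearly independent at points of some nonempty open set. Then, in exponential coordinates at the origin (where each X_i is linear), all Christoffel symbols of ∇ vanish identically; in particular ∇ is flat. -/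
/-!
Some combination `∑ cᵢ Lᵢ` of the commuting linear fields is the identity: choose it to fix a
point `p₀` where the `Lᵢ p₀` form a basis; by commutativity it then fixes every `Lⱼ p₀`. The
Killing equation is linear in the field, so the Euler field `p ↦ p` is Killing too, which says
`DΓ_p(p) = -Γ_p`: `Γ` is homogeneous of degree `-1`. Being smooth at the origin, it vanishes near
`0`, and then on all of `U` by analyticity.
-/

noncomputable section

/-- Lie bracket of vector fields on `ℝⁿ`. -/
def lieE {n : ℕ} (X Y : EuclideanSpace ℝ (Fin n) → EuclideanSpace ℝ (Fin n)) :
    EuclideanSpace ℝ (Fin n) → EuclideanSpace ℝ (Fin n) :=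
  fun p => fderiv ℝ Y p (X p) - fderiv ℝ X p (Y p)

/-- Covariant derivative associated to (bilinear) Christoffel data `Γ`. -/
def covE {n : ℕ}
    (Γ : EuclideanSpace ℝ (Fin n) →
      (EuclideanSpace ℝ (Fin n) →L[ℝ] EuclideanSpace ℝ (Fin n) →L[ℝ]
        EuclideanSpace ℝ (Fin n)))
    (X Y : EuclideanSpace ℝ (Fin n) → EuclideanSpace ℝ (Fin n)) :
    EuclideanSpace ℝ (Fin n) → EuclideanSpace ℝ (Fin n) :=
  fun p => fderiv ℝ Y p (X p) + Γ p (X p) (Y p)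

/-- Killing field condition `[X, ∇_Y Z] − ∇_Y [X,Z] = ∇_{[X,Y]} Z` on `U`. -/
def IsKillingOn {n : ℕ}
    (Γ : EuclideanSpace ℝ (Fin n) →
      (EuclideanSpace ℝ (Fin n) →L[ℝ] EuclideanSpace ℝ (Fin n) →L[ℝ]
        EuclideanSpace ℝ (Fin n)))
    (X : EuclideanSpace ℝ (Fin n) → EuclideanSpace ℝ (Fin n))
    (U : Set (EuclideanSpace ℝ (Fin n))) : Prop :=
  ∀ Y Z : EuclideanSpace ℝ (Fin n) → EuclideanSpace ℝ (Fin n),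
    ContDiff ℝ ⊤ Y → ContDiff ℝ ⊤ Z → ∀ p ∈ U,
      lieE X (covE Γ Y Z) p = covE Γ Y (lieE X Z) p + covE Γ (lieE X Y) Z p

open Set Metric Filter Topology

theorem ContinuousLinearMap.eq_zero_of_eventuallyEq_zero {𝕜 E F : Type*}
    [NontriviallyNormedField 𝕜] [NormedAddCommGroup E] [NormedSpace 𝕜 E]
    [NormedAddCommGroup F] [NormedSpace 𝕜 F] {A : E →L[𝕜] F} (hA : A =ᶠ[𝓝 0] 0) : A = 0 :=
  A.hasFDerivAt.unique ((hasFDerivAt_const 0 0).congr_of_eventuallyEq hA)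

/-- A combination `A` of the `Lᵢ` with `A v = v` commutes with every `Lⱼ`, hence fixes every
`Lⱼ v`. -/
theorem Module.End.one_mem_span_of_commute {R M ι : Type*} [CommRing R] [AddCommGroup M]
    [Module R M] [Fintype ι] {L : ι → Module.End R M} (hL : ∀ i j, Commute (L i) (L j))
    {v : M} (hv : Submodule.span R (range fun i => L i v) = ⊤) :
    1 ∈ Submodule.span R (range L) := by
  obtain ⟨c, hc⟩ :=
    (Submodule.mem_span_range_iff_exists_fun R).mp (hv ▸ Submodule.mem_top (x := v))
  set A := ∑ i, c i • L i
  have hAv : A v = v := by simpa [A] using hc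
  have hAcomm : ∀ j, Commute A (L j) := fun j =>
    (Commute.sum_left _ _ _ fun i _ => (hL i j).smul_left (c i))
  have hA : A = 1 := LinearMap.ext_on_range hv fun j => by
    rw [Module.End.one_apply, ← Module.End.mul_apply, (hAcomm j).eq, Module.End.mul_apply, hAv]
  exact hA ▸ Submodule.sum_mem _ fun i _ => Submodule.smul_mem _ _ (Submodule.subset_span ⟨i, rfl⟩)

/-- `t ↦ t • f (t • q)` has derivative zero on `[0, 1]`. -/
theorem eq_zero_of_fderiv_apply_self_eq_neg {E F : Type*} [NormedAddCommGroup E]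
    [NormedSpace ℝ E] [NormedAddCommGroup F] [NormedSpace ℝ F] {f : E → F} {f' : E → E →L[ℝ] F}
    {s : Set E} (hs : StarConvex ℝ 0 s) (hf : ∀ q ∈ s, HasFDerivAt f (f' q) q)
    (heuler : ∀ q ∈ s, f' q q = -f q) {q : E} (hq : q ∈ s) : f q = 0 := by
  have hderiv : ∀ t ∈ Icc (0 : ℝ) 1, HasDerivAt (fun t : ℝ => t • f (t • q)) 0 t := by
    intro t ht
    have htq : t • q ∈ s := hs.smul_mem hq ht.1 ht.2
    have hline : HasDerivAt (fun t : ℝ => t • q) q t := by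
      simpa using (hasDerivAt_id t).smul_const q
    refine ((hasDerivAt_id' t).smul ((hf _ htq).comp_hasDerivAt t hline)).congr_deriv ?_
    rw [one_smul, Function.comp_apply, ← map_smul, heuler _ htq, neg_add_cancel]
  have hcont : ContinuousOn (fun t : ℝ => t • f (t • q)) (Icc 0 1) := fun t ht =>
    (hderiv t ht).continuousAt.continuousWithinAt
  simpa using constant_of_has_deriv_right_zero hcont
    (fun t ht => (hderiv t (Ico_subset_Icc_self ht)).hasDerivWithinAt) 1 (right_mem_Icc.2 zero_le_one)

section Killing

variable {E : Type*} [NormedAddCommGroup E] [NormedSpace ℝ E]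

/-- The Killing equation of the linear field `A`, tested on the constant fields `u`, `v`, as a
linear function of `A`. -/
def killingDefect (Γ : E → E →L[ℝ] E →L[ℝ] E) (p u v : E) : Module.End ℝ E →ₗ[ℝ] E where
  toFun A := fderiv ℝ Γ p (A p) u v - A (Γ p u v) + Γ p u (A v) + Γ p (A u) v
  map_add' A B := by simp only [LinearMap.add_apply, map_add, add_apply]; abel
  map_smul' c A := by simp only [LinearMap.smul_apply, map_smul, smul_apply,
    RingHom.id_apply, smul_sub, smul_add]

theorem killingDefect_one (Γ : E → E →L[ℝ] E →L[ℝ] E) (p u v : E) :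
    killingDefect Γ p u v 1 = fderiv ℝ Γ p p u v + Γ p u v := by
  simp only [killingDefect, LinearMap.coe_mk, AddHom.coe_mk, Module.End.one_apply]
  abel

end Killing

section Euclidean

variable {n : ℕ}

local notation "𝔼" => EuclideanSpace ℝ (Fin n)

theorem lieE_clm (A B : 𝔼 →L[ℝ] 𝔼) (p : 𝔼) :
    lieE (fun q => A q) (fun q => B q) p = B (A p) - A (B p) := by
  simp [lieE, ContinuousLinearMap.fderiv]

theorem commute_of_lieE_eq_zero {U : Set 𝔼} (hU : U ∈ 𝓝 0) {A B : 𝔼 →L[ℝ] 𝔼}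
    (h : ∀ p ∈ U, lieE (fun q => A q) (fun q => B q) p = 0) :
    Commute (A : Module.End ℝ 𝔼) (B : Module.End ℝ 𝔼) := by
  have hBA : B.comp A - A.comp B = 0 := ContinuousLinearMap.eq_zero_of_eventuallyEq_zero <|
    eventually_of_mem hU fun p hp => by simpa [lieE_clm] using h p hp
  refine LinearMap.ext fun w => (sub_eq_zero.mp ?_).symm
  exact congr($hBA w)

theorem IsKillingOn.killingDefect_eq_zero {Γ : 𝔼 → 𝔼 →L[ℝ] 𝔼 →L[ℝ] 𝔼} {A : 𝔼 →L[ℝ] 𝔼}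
    {U : Set 𝔼} (hA : IsKillingOn Γ (fun q => A q) U) {p : 𝔼} (hp : p ∈ U)
    (hΓ : DifferentiableAt ℝ Γ p) (u v : 𝔼) : killingDefect Γ p u v (A : Module.End ℝ 𝔼) = 0 := by
  have h := hA (fun _ => u) (fun _ => v) contDiff_const contDiff_const p hp
  have hcov : covE Γ (fun _ => u) (fun _ => v) = fun q => Γ q u v := by
    funext q; simp [covE]
  have hlie : ∀ w, lieE (fun q => A q) (fun _ => w) = fun _ => -A w := by
    intro w; funext q; simp [lieE, ContinuousLinearMap.fderiv]
  have hd : fderiv ℝ (fun q => Γ q u v) p = ((fderiv ℝ Γ p).flip u).flip v := by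
    have h1 := hΓ.hasFDerivAt.clm_apply (hasFDerivAt_const u p)
    exact (h1.clm_apply (hasFDerivAt_const v p)).fderiv.trans (by ext; simp)
  simp only [lieE, hcov, hd, ContinuousLinearMap.flip_apply, ContinuousLinearMap.fderiv, covE,
    fderiv_fun_const, Pi.zero_apply, zero_apply, zero_add, hlie,
    fderiv_fun_neg, neg_zero, zero_sub, map_neg, neg_apply] at h
  simp only [killingDefect, LinearMap.coe_mk, AddHom.coe_mk, ContinuousLinearMap.coe_coe, h]
  abel

theorem fderiv_apply_self_eq_neg_of_isKillingOn {ι : Type*} {Γ : 𝔼 → 𝔼 →L[ℝ] 𝔼 →L[ℝ] 𝔼}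
    {L : ι → 𝔼 →L[ℝ] 𝔼} {U : Set 𝔼}
    (hone : 1 ∈ Submodule.span ℝ (range fun i => (L i : Module.End ℝ 𝔼)))
    (hkill : ∀ i, IsKillingOn Γ (fun q => L i q) U) {p : 𝔼} (hp : p ∈ U)
    (hΓ : DifferentiableAt ℝ Γ p) : fderiv ℝ Γ p p = -Γ p := by
  refine ContinuousLinearMap.ext fun u => ContinuousLinearMap.ext fun v => ?_
  have h := (Submodule.span_le (p := LinearMap.ker (killingDefect Γ p u v))).mpr
    (range_subset_iff.mpr fun i => (hkill i).killingDefect_eq_zero hp hΓ u v) hone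
  rw [LinearMap.mem_ker, killingDefect_one] at h
  exact eq_neg_of_add_eq_zero_left h

end Euclidean

theorem stmt17_general (n : ℕ)
    (U : Set (EuclideanSpace ℝ (Fin n))) (hUo : IsOpen U)
    (hUc : IsPreconnected U) (h0U : (0 : EuclideanSpace ℝ (Fin n)) ∈ U)
    (Γ : EuclideanSpace ℝ (Fin n) →
      (EuclideanSpace ℝ (Fin n) →L[ℝ] EuclideanSpace ℝ (Fin n) →L[ℝ]
        EuclideanSpace ℝ (Fin n)))
    (hΓa : AnalyticOnNhd ℝ Γ U)
    (L : Fin n → (EuclideanSpace ℝ (Fin n) →L[ℝ] EuclideanSpace ℝ (Fin n)))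
    (hcomm : ∀ i j, ∀ p ∈ U, lieE (fun q => L i q) (fun q => L j q) p = 0)
    (hkill : ∀ i, IsKillingOn Γ (fun q => L i q) U)
    (V : Set (EuclideanSpace ℝ (Fin n))) (hVne : V.Nonempty)
    (hind : ∀ p ∈ V, LinearIndependent ℝ fun i => L i p) :
    ∀ p ∈ U, Γ p = 0 := by
  obtain ⟨p₀, hp₀⟩ := hVne
  have hspan : Submodule.span ℝ (range fun i => (L i : Module.End ℝ _) p₀) = ⊤ :=
    (hind p₀ hp₀).span_eq_top_of_card_eq_finrank' (by simp)
  have hLcomm : ∀ i j, Commute (L i : Module.End ℝ (EuclideanSpace ℝ (Fin n))) (L j) :=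
    fun i j => commute_of_lieE_eq_zero (hUo.mem_nhds h0U) (hcomm i j)
  have hone := Module.End.one_mem_span_of_commute hLcomm hspan
  have heuler : ∀ p ∈ U, fderiv ℝ Γ p p = -Γ p := fun p hp =>
    fderiv_apply_self_eq_neg_of_isKillingOn hone hkill hp (hΓa p hp).differentiableAt
  obtain ⟨ε, hε, hball⟩ := Metric.isOpen_iff.mp hUo 0 h0U
  have hlocal : Γ =ᶠ[𝓝 0] 0 := eventually_of_mem (ball_mem_nhds 0 hε) fun q hq =>
    eq_zero_of_fderiv_apply_self_eq_neg ((convex_ball 0 ε).starConvex (mem_ball_self hε))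
      (fun x hx => (hΓa x (hball hx)).differentiableAt.hasFDerivAt)
      (fun x hx => heuler x (hball hx)) hq
  exact fun p hp => hΓa.eqOn_zero_of_preconnected_of_eventuallyEq_zero hUc h0U hlocal hp

/-- a real-analytic torsion-free connection near the origin of
`ℝⁿ` admitting `n` pairwise commuting Killing fields, linear (in exponential
coordinates) and vanishing at the origin, that are linearly independent on some
nonempty open set, has identically vanishing Christoffel symbols; in particular
it is flat. -/
theorem stmt17 (n : ℕ) (hn : 0 < n)
    (U : Set (EuclideanSpace ℝ (Fin n))) (hUo : IsOpen U)
    (hUc : IsPreconnected U) (h0U : (0 : EuclideanSpace ℝ (Fin n)) ∈ U)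
    (Γ : EuclideanSpace ℝ (Fin n) →
      (EuclideanSpace ℝ (Fin n) →L[ℝ] EuclideanSpace ℝ (Fin n) →L[ℝ]
        EuclideanSpace ℝ (Fin n)))
    (hΓa : AnalyticOnNhd ℝ Γ U)
    (hΓsym : ∀ p u v, Γ p u v = Γ p v u)
    (L : Fin n → (EuclideanSpace ℝ (Fin n) →L[ℝ] EuclideanSpace ℝ (Fin n)))
    (hvanish : ∀ i, L i 0 = 0)
    (hcomm : ∀ i j, ∀ p ∈ U, lieE (fun q => L i q) (fun q => L j q) p = 0)
    (hkill : ∀ i, IsKillingOn Γ (fun q => L i q) U)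
    (V : Set (EuclideanSpace ℝ (Fin n))) (hVo : IsOpen V) (hVne : V.Nonempty)
    (hVU : V ⊆ U)
    (hind : ∀ p ∈ V, LinearIndependent ℝ fun i => L i p) :
    ∀ p ∈ U, Γ p = 0 :=
  stmt17_general n U hUo hUc h0U Γ hΓa L hcomm hkill V hVne hind
end
end

section
/- Let ∇ be a left-invariant connection on Aff₀(ℝ) encoded by constants (α,β,γ,δ,ε,φ) with β = 0, so that X is a marking (∇_X X = αX). Suppose X + λY with λ ≠ 0 is also a marking with associated constants α' = α(∇, X+λY) and δ' = δ(∇, X+λY). Then (λγ, λ²ε, λφ) = (δ + δ' − 1 − α, α + α' − 2δ − 2δ' + 2, 1 − 2δ + α'). In particular, the connection is determined by α, α', δ, δ' up to the natural equivalence. -/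
noncomputable section

/-- The generator `X` of `𝔞 = ⟨X,Y : [X,Y]=Y⟩`, in coordinates. -/
def Xv : Pl := (1, 0)
/-- The generator `Y` of `𝔞 = ⟨X,Y : [X,Y]=Y⟩`, in coordinates. -/
def Yv : Pl := (0, 1)

/-!
Expand `∇_{X+λY}(X+λY)` and `∇_{X+λY} Y` bilinearly in the constants of `∇`, using torsion-freeness
`∇_Y X = ∇_X Y - [X,Y]` to eliminate `∇_Y X`. Comparing coefficients with `α'(X+λY)` and
`g(X+λY) + δ'Y` gives four scalar equations; the `Y`-coefficient of the first one is divisible by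
`λ` and yields `λφ`, after which the remaining three are linear in `λγ` and `λ²ε`.
-/

section Expansion

variable {R M : Type*} [CommRing R] [AddCommGroup M] [Module R M]
  (D : M →ₗ[R] M →ₗ[R] M) {X Y : M} {α γ δ ε φ : R}

theorem connection_add_smul_self (l : R) (h1 : D X X = α • X) (h2 : D X Y = γ • X + δ • Y)
    (h3 : D Y X = D X Y - Y) (h4 : D Y Y = ε • X + φ • Y) :
    D (X + l • Y) (X + l • Y) = (α + 2 * l * γ + l ^ 2 * ε) • X + (l * (2 * δ - 1) + l ^ 2 * φ) • Y := by
  simp only [map_add, map_smul, LinearMap.add_apply, LinearMap.smul_apply, h1, h2, h3, h4]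
  module

theorem connection_add_smul_right (l : R) (h2 : D X Y = γ • X + δ • Y)
    (h4 : D Y Y = ε • X + φ • Y) :
    D (X + l • Y) Y = (γ + l * ε) • X + (δ + l * φ) • Y := by
  simp only [map_add, map_smul, LinearMap.add_apply, LinearMap.smul_apply, h2, h4]
  module

end Expansion

theorem smul_Xv_add_smul_Yv (a b : ℝ) : a • Xv + b • Yv = (a, b) := by
  simp [Xv, Yv]

theorem marking_constants_of_coeffs {K : Type*} [Field K] {α γ δ ε φ l α' δ' g : K} (hl : l ≠ 0)
    (hXX : α + 2 * l * γ + l ^ 2 * ε = α') (hYX : l * (2 * δ - 1) + l ^ 2 * φ = α' * l)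
    (hXY : γ + l * ε = g) (hYY : δ + l * φ = g * l + δ') :
    l * γ = δ + δ' - 1 - α ∧
    l ^ 2 * ε = α + α' - 2 * δ - 2 * δ' + 2 ∧
    l * φ = 1 - 2 * δ + α' := by
  have hφ : l * φ = 1 - 2 * δ + α' := mul_left_cancel₀ hl (by linear_combination hYX)
  exact ⟨by linear_combination hXX + hYY - hφ - l * hXY,
    by linear_combination -hXX - 2 * hYY + 2 * hφ + 2 * l * hXY, hφ⟩

/-- let `∇` be a left-invariant connection on `Aff₀(ℝ)` with
constants `(α,0,γ,δ,ε,φ)` (so `X` is a marking, `∇_X X = αX`, `δ(∇,X) = δ`).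
If `X + λY` (λ ≠ 0) is also a marking, with constants `α' = α(∇,X+λY)` and
`δ' = δ(∇,X+λY)`, then
`(λγ, λ²ε, λφ) = (δ+δ'−1−α, α+α'−2δ−2δ'+2, 1−2δ+α')`. -/
theorem stmt18 (D : Pl →ₗ[ℝ] Pl →ₗ[ℝ] Pl) (α γ δ ε φ l α' δ' : ℝ) (hl : l ≠ 0)
    (h1 : D Xv Xv = α • Xv)
    (h2 : D Xv Yv = γ • Xv + δ • Yv)
    (h3 : D Yv Xv = D Xv Yv - Yv)
    (h4 : D Yv Yv = ε • Xv + φ • Yv)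
    (hα' : D (Xv + l • Yv) (Xv + l • Yv) = α' • (Xv + l • Yv))
    (hδ' : ∃ g : ℝ, D (Xv + l • Yv) Yv = g • (Xv + l • Yv) + δ' • Yv) :
    l * γ = δ + δ' - 1 - α ∧
    l ^ 2 * ε = α + α' - 2 * δ - 2 * δ' + 2 ∧
    l * φ = 1 - 2 * δ + α' := by
  obtain ⟨g, hg⟩ := hδ'
  have hXX : α' • (Xv + l • Yv) = α' • Xv + (α' * l) • Yv := by module
  have hXY : g • (Xv + l • Yv) + δ' • Yv = g • Xv + (g * l + δ') • Yv := by module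
  rw [connection_add_smul_self D l h1 h2 h3 h4, hXX, smul_Xv_add_smul_Yv, smul_Xv_add_smul_Yv,
    Prod.mk.injEq] at hα'
  rw [connection_add_smul_right D l h2 h4, hXY, smul_Xv_add_smul_Yv, smul_Xv_add_smul_Yv,
    Prod.mk.injEq] at hg
  exact marking_constants_of_coeffs hl hα'.1 hα'.2 hg.1 hg.2
end
end
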